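/- arXiv:nlin/0412050 — 7 statements merged into one kernel-verified Lean document; each statement's English description precedes it below -/
import Mathlib

section
/- If φ^{t+1}(n) = φ^t(n) - μ_t φ^t(n+1), ψ^t(n) = φ^{t-1}(n) - μ_t φ^{t-1}(n+1), and P^t φ^{t-1}(n) = ψ^t(n) - μ_t ψ^t(n-1) hold for all n and t, where P^t = (1 - p μ_t)(1 - p^{-1} μ_t), then φ^{t+1}(n) = ψ^t(n) - μ_{t-1} ψ^t(n+1) for all n and t. -/
/-! Both sides arise from `φ^{t-1}` by applying the operators `1 - μ_{t-1} S` and `1 - μ_t S`,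
where `S` is the shift `n ↦ n + 1`, in opposite orders; these operators commute. -/

def oneSubMulShift {R : Type*} [Ring R] (a : R) (f : ℤ → R) : ℤ → R :=
  fun n => f n - a * f (n + 1)

theorem oneSubMulShift_comm {R : Type*} [CommRing R] (a b : R) (f : ℤ → R) :
    oneSubMulShift a (oneSubMulShift b f) = oneSubMulShift b (oneSubMulShift a f) := by
  funext n
  simp only [oneSubMulShift]
  ring

theorem stmt_0_general (φ ψ : ℤ → ℤ → ℂ) (μ : ℤ → ℂ)
    (h1 : ∀ t n, φ (t + 1) n = φ t n - μ t * φ t (n + 1))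
    (h2 : ∀ t n, ψ t n = φ (t - 1) n - μ t * φ (t - 1) (n + 1)) :
    ∀ t n, φ (t + 1) n = ψ t n - μ (t - 1) * ψ t (n + 1) := by
  have hφ : ∀ t, φ (t + 1) = oneSubMulShift (μ t) (φ t) := fun t => funext (h1 t)
  have hψ : ∀ t, ψ t = oneSubMulShift (μ t) (φ (t - 1)) := fun t => funext (h2 t)
  intro t n
  have hstep : φ (t + 1) = oneSubMulShift (μ (t - 1)) (ψ t) := by
    calc φ (t + 1) = oneSubMulShift (μ t) (oneSubMulShift (μ (t - 1)) (φ (t - 1))) := by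
          rw [hφ t, ← hφ (t - 1), sub_add_cancel]
      _ = oneSubMulShift (μ (t - 1)) (ψ t) := by rw [oneSubMulShift_comm, hψ]
  exact congrFun hstep n

/-- the linear relations imply φ^{t+1}(n) = ψ^t(n) - μ_{t-1} ψ^t(n+1). -/
theorem stmt_0 (φ ψ : ℤ → ℤ → ℂ) (μ : ℤ → ℂ) (p : ℂ)
    (hμ : ∀ t, μ t ≠ 0) (hp : p ≠ 0)
    (h1 : ∀ t n, φ (t + 1) n = φ t n - μ t * φ t (n + 1))
    (h2 : ∀ t n, ψ t n = φ (t - 1) n - μ t * φ (t - 1) (n + 1))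
    (h3 : ∀ t n, (1 - p * μ t) * (1 - p⁻¹ * μ t) * φ (t - 1) n
          = ψ t n - μ t * ψ t (n - 1)) :
    ∀ t n, φ (t + 1) n = ψ t n - μ (t - 1) * ψ t (n + 1) :=
  stmt_0_general φ ψ μ h1 h2
end

section
/- If φ^{t+1}(n) = φ^t(n) - μ_t φ^t(n+1), ψ^t(n) = φ^{t-1}(n) - μ_t φ^{t-1}(n+1), and P^t φ^{t-1}(n) = ψ^t(n) - μ_t ψ^t(n-1) hold for all n and t, where P^t = (1 - p μ_t)(1 - p^{-1} μ_t), then P^t φ^t(n) = φ^{t+1}(n) - μ_t φ^{t+1}(n-1) for all n and t. -/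
/-! Since `(1 - pμ)(1 - p⁻¹μ) = 1 - (p + p⁻¹)μ + μ²`, for `μ ≠ 0` the relation
`P f(n) = g(n) - μ g(n-1)` with `g(n) = f(n) - μ f(n+1)` says exactly that `f` is an eigenvector
of `f ↦ f(· + 1) + f(· - 1)` with eigenvalue `p + p⁻¹`, a condition that does not involve `μ`.
Hypothesis `h3` at time `t + 1` therefore gives this eigen-relation for `φ^t`, and reading the
equivalence backwards with `μ_t` and `h1` gives the claim at time `t`. -/

theorem factor_mul_eq_sub_shift_iff (f : ℤ → ℂ) {μ p : ℂ} (hμ : μ ≠ 0) (hp : p ≠ 0) (n : ℤ) :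
    (1 - p * μ) * (1 - p⁻¹ * μ) * f n = (f n - μ * f (n + 1)) - μ * (f (n - 1) - μ * f n) ↔
      f (n + 1) + f (n - 1) = (p + p⁻¹) * f n := by
  have hdiff : (1 - p * μ) * (1 - p⁻¹ * μ) * f n
      - ((f n - μ * f (n + 1)) - μ * (f (n - 1) - μ * f n))
      = μ * (f (n + 1) + f (n - 1) - (p + p⁻¹) * f n) := by
    linear_combination μ ^ 2 * f n * mul_inv_cancel₀ hp
  rw [← sub_eq_zero, hdiff, mul_eq_zero, or_iff_right hμ, sub_eq_zero]

/-- the linear relations imply P^t φ^t(n) = φ^{t+1}(n) - μ_t φ^{t+1}(n-1). -/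
theorem stmt_1 (φ ψ : ℤ → ℤ → ℂ) (μ : ℤ → ℂ) (p : ℂ)
    (hμ : ∀ t, μ t ≠ 0) (hp : p ≠ 0)
    (h1 : ∀ t n, φ (t + 1) n = φ t n - μ t * φ t (n + 1))
    (h2 : ∀ t n, ψ t n = φ (t - 1) n - μ t * φ (t - 1) (n + 1))
    (h3 : ∀ t n, (1 - p * μ t) * (1 - p⁻¹ * μ t) * φ (t - 1) n
          = ψ t n - μ t * ψ t (n - 1)) :
    ∀ t n, (1 - p * μ t) * (1 - p⁻¹ * μ t) * φ t n
      = φ (t + 1) n - μ t * φ (t + 1) (n - 1) := by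
  intro t n
  have heigen : φ t (n + 1) + φ t (n - 1) = (p + p⁻¹) * φ t n := by
    have h := h3 (t + 1) n
    rw [h2 (t + 1) n, h2 (t + 1) (n - 1)] at h
    simp only [add_sub_cancel_right, sub_add_cancel] at h
    exact (factor_mul_eq_sub_shift_iff (φ t) (hμ (t + 1)) hp n).mp h
  rw [h1 t n, h1 t (n - 1), sub_add_cancel]
  exact (factor_mul_eq_sub_shift_iff (φ t) (hμ t) hp n).mpr heigen
end

section
/- Suppose P_i^t φ_i^t(n) = φ_i^{t+1}(n) - μ_t φ_i^{t+1}(n-1) for all i, n, t, where each P_i^t ≠ 0. Then (∏_{i=1}^N P_i^t)^{-1} τ_n^{t+1} equals the determinant of the N×N matrix whose first column is (P_i^t)^{-1} φ_i^{t+1}(n) and whose remaining columns are φ_i^t(n+j-1), j = 2,…,N, where τ_n^{t+1} = det(φ_i^{t+1}(n+j-1))_{1≤i,j≤N}. -/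
open Matrix in
/-- difference formula (dif4) for the Casorati determinant. -/
theorem stmt_8 (N : ℕ) (hN : 1 ≤ N) (φ : Fin N → ℤ → ℤ → ℂ) (μ : ℤ → ℂ)
    (P : Fin N → ℤ → ℂ) (hP : ∀ i t, P i t ≠ 0)
    (h5 : ∀ i t n, P i t * φ i t n = φ i (t + 1) n - μ t * φ i (t + 1) (n - 1)) :
    ∀ t n : ℤ,
      (∏ i, P i t)⁻¹ * Matrix.det (Matrix.of fun i j : Fin N => φ i (t + 1) (n + (j : ℤ)))
      = Matrix.det (Matrix.of fun i j : Fin N =>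
          if (j : ℕ) = 0 then (P i t)⁻¹ * φ i (t + 1) n else φ i t (n + (j : ℤ))) := by
  intro t n
  have hφ : ∀ i (m : ℤ), φ i t m = (P i t)⁻¹ * (φ i (t+1) m - μ t * φ i (t+1) (m-1)) := by
    intro i m
    rw [← h5 i t m, inv_mul_eq_div, mul_div_cancel_left₀ _ (hP i t)]
  set A : Matrix (Fin N) (Fin N) ℂ := Matrix.of fun i j =>
    if (j:ℕ) = 0 then φ i (t+1) n else φ i (t+1) (n+(j:ℤ)) - μ t * φ i (t+1) (n+(j:ℤ)-1)
    with hA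
  have hM : (Matrix.of fun i j : Fin N =>
      if (j : ℕ) = 0 then (P i t)⁻¹ * φ i (t + 1) n else φ i t (n + (j : ℤ)))
      = Matrix.of fun i j => (P i t)⁻¹ * A i j := by
    ext i j
    by_cases hj : (j:ℕ) = 0 <;> simp [hA, hj, hφ]
  rw [hM, Matrix.det_mul_column]
  have hprod : ∏ i, (P i t)⁻¹ = (∏ i, P i t)⁻¹ := by
    rw [← Finset.prod_inv_distrib]
  rw [hprod]
  congr 1
  -- column operations
  set D : ℕ → Matrix (Fin N) (Fin N) ℂ := fun k => Matrix.of fun i j =>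
    if (j:ℕ) < k then φ i (t+1) (n+(j:ℤ)) else A i j with hD
  have hD1 : D 1 = A := by
    ext i j
    by_cases hj : (j:ℕ) = 0 <;> simp [hD, hA, hj, Nat.lt_one_iff]
  have hstep : ∀ k, 1 ≤ k → (hk : k < N) → (D (k+1)).det = (D k).det := by
    intro k hk1 hkN
    set jk : Fin N := ⟨k, hkN⟩ with hjk
    set jk' : Fin N := ⟨k-1, lt_trans (Nat.sub_lt (by omega) one_pos) hkN⟩ with hjk'
    have hne : jk ≠ jk' := by
      simp [hjk, hjk', Fin.ext_iff]; omega
    have hupd : D (k+1) = Matrix.updateCol (D k) jk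
        (fun i => (D k) i jk + μ t • (D k) i jk') := by
      ext i j
      by_cases hj : j = jk
      · subst hj
        have h1 : ¬ ((jk:ℕ) < k) := by simp [hjk]
        have h2 : ((jk':ℕ) : ℕ) < k := by simp [hjk']; omega
        have h3 : (jk:ℕ) ≠ 0 := by simp [hjk]; omega
        have hcast : n + ((jk:ℕ):ℤ) - 1 = n + ((jk' : ℕ):ℤ) := by
          simp [hjk, hjk']
          push_cast [Nat.cast_sub hk1]
          ring
        simp only [Matrix.updateCol_self]
        simp [hD, hA, h1, h2, h3, hjk, smul_eq_mul]
        rw [hcast]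
        rw [if_neg (by omega)]
        ring
      · rw [Matrix.updateCol_ne hj]
        have : ((j:ℕ) < k + 1) ↔ ((j:ℕ) < k) := by
          constructor
          · intro h
            rcases Nat.lt_succ_iff_lt_or_eq.mp h with h | h
            · exact h
            · exact absurd (Fin.ext (show (j:ℕ) = (jk:ℕ) by simp [hjk, h])) hj
          · omega
        simp only [hD, Matrix.of_apply, this]
    rw [hupd, Matrix.det_updateCol_add_smul_self _ hne]
  have hall : ∀ k, 1 ≤ k → k ≤ N → (D k).det = A.det := by
    intro k
    induction k with
    | zero => omega
    | succ m ih =>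
      intro _ hmN
      rcases Nat.eq_or_lt_of_le (Nat.one_le_iff_ne_zero.mpr (Nat.succ_ne_zero m)) with h | h
      · have hm0 : m = 0 := by omega
        subst hm0
        rw [hD1]
      · have hm1 : 1 ≤ m := by omega
        rw [hstep m hm1 (by omega), ih hm1 (by omega)]
  have hDN : D N = Matrix.of fun i j : Fin N => φ i (t + 1) (n + (j : ℤ)) := by
    ext i j
    simp [hD, j.isLt]
  rw [← hDN, hall N hN le_rfl]
end

section
/- Suppose (1 - μ_t μ_{t-1}) ψ_i^t(n) = P_i^t φ_i^{t-1}(n) + μ_t φ_i^{t+1}(n-1) and φ_i^{t+1}(n) = ψ_i^t(n) - μ_{t-1} ψ_i^t(n+1) for all i, n, t, with all P_i^t ≠ 0. Then (1 - μ_{t-1} μ_t)(∏_{i=1}^N P_i^t)^{-1} σ_n^t equals the determinant of the N×N matrix whose first column is (P_i^t)^{-1} φ_i^{t+1}(n), whose columns j = 2,…,N-1 are φ_i^t(n+j-1), and whose last column is φ_i^{t-1}(n+N-1), where σ_n^t = det(ψ_i^t(n+j-1))_{1≤i,j≤N}; here φ_i also satisfies φ_i^{t+1}(n) = φ_i^t(n)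 - μ_t φ_i^t(n+1). -/
/-!
Both sides are related by column operations on the Casorati matrix `(ψ_i^t(n+j))`. Replacing
columns `0, …, N-2` by `ψ(n+j) - μ_{t-1} ψ(n+j+1) = φ^{t+1}(n+j)` is right multiplication by a
unipotent lower bidiagonal matrix. Subtracting `μ_t` times the previous column from every column
`j ≥ 1`, after scaling the last one by `1 - μ_{t-1} μ_t`, is right multiplication by an upper
bidiagonal matrix of determinant `1 - μ_{t-1} μ_t`; by the linear relations it turns the columns
into `φ^{t+1}(n)`, `P_i^t φ_i^t(n+j)` and, in the last column, `P_i^t φ_i^{t-1}(n+N-1)`.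
-/

namespace Matrix

variable {R : Type*} [CommRing R] {N : ℕ}

def lowerBidiagonal (d : Fin N → R) (e : R) : Matrix (Fin N) (Fin N) R :=
  of fun i j => if i = j then d j else if (i : ℕ) = j + 1 then e else 0

theorem lowerBidiagonal_isLowerTriangular (d : Fin N → R) (e : R) :
    (lowerBidiagonal d e).IsLowerTriangular := by
  intro i j (hij : (i : ℕ) < j)
  simp only [lowerBidiagonal, of_apply]
  rw [if_neg (by grind), if_neg (by omega)]

theorem det_lowerBidiagonal (d : Fin N → R) (e : R) :
    (lowerBidiagonal d e).det = ∏ i, d i := by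
  rw [det_of_isLowerTriangular _ (lowerBidiagonal_isLowerTriangular d e)]
  simp [lowerBidiagonal]

theorem mul_lowerBidiagonal_apply (M : Matrix (Fin N) (Fin N) R) (d : Fin N → R) (e : R)
    (i j : Fin N) :
    (M * lowerBidiagonal d e) i j =
      M i j * d j + if h : (j : ℕ) + 1 < N then M i ⟨j + 1, h⟩ * e else 0 := by
  have hsplit : ∀ k : Fin N, lowerBidiagonal d e k j =
      (if k = j then d j else 0) + if (k : ℕ) = j + 1 then e else 0 := by
    intro k
    by_cases hk : k = j
    · subst hk; simp [lowerBidiagonal]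
    · simp [lowerBidiagonal, hk]
  simp only [mul_apply, hsplit, mul_add, Finset.sum_add_distrib, mul_ite, mul_zero,
    Finset.sum_ite_eq', Finset.mem_univ, if_true]
  split_ifs with h
  · rw [Finset.sum_eq_single ⟨j + 1, h⟩] <;> simp +contextual [Fin.ext_iff]
  · exact congrArg _ (Finset.sum_eq_zero fun k _ => if_neg (by omega))

theorem mul_transpose_lowerBidiagonal_apply (M : Matrix (Fin N) (Fin N) R) (d : Fin N → R)
    (e : R) (i j : Fin N) :
    (M * (lowerBidiagonal d e)ᵀ) i j =
      M i j * d j + if h : 0 < (j : ℕ) then M i ⟨j - 1, by omega⟩ * e else 0 := by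
  have hsplit : ∀ k : Fin N, (lowerBidiagonal d e)ᵀ k j =
      (if k = j then d j else 0) + if (k : ℕ) + 1 = j then e else 0 := by
    intro k
    by_cases hk : k = j
    · subst hk; simp [lowerBidiagonal]
    · simp [lowerBidiagonal, hk, Ne.symm hk, eq_comm]
  simp only [mul_apply, hsplit, mul_add, Finset.sum_add_distrib, mul_ite, mul_zero,
    Finset.sum_ite_eq', Finset.mem_univ, if_true]
  split_ifs with h
  · rw [Finset.sum_eq_single ⟨j - 1, by omega⟩] <;> simp +contextual [Fin.ext_iff] <;> omega
  · exact congrArg _ (Finset.sum_eq_zero fun k _ => if_neg (by omega))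

end Matrix

open Matrix

section ScalarRelations

variable {R : Type*} [CommRing R] {φ ψ : ℤ → ℤ → R} {μ P : ℤ → R}

theorem P_mul_phi_sub_one_eq
    (h6 : ∀ t n, (1 - μ t * μ (t - 1)) * ψ t n = P t * φ (t - 1) n + μ t * φ (t + 1) (n - 1))
    (h4 : ∀ t n, φ (t + 1) n = ψ t n - μ (t - 1) * ψ t (n + 1)) (t n : ℤ) :
    P t * φ (t - 1) n = ψ t n - μ t * ψ t (n - 1) := by
  have e4 := h4 t (n - 1)
  rw [sub_add_cancel] at e4
  linear_combination -h6 t n - μ t * e4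

theorem P_mul_phi_eq
    (h6 : ∀ t n, (1 - μ t * μ (t - 1)) * ψ t n = P t * φ (t - 1) n + μ t * φ (t + 1) (n - 1))
    (h4 : ∀ t n, φ (t + 1) n = ψ t n - μ (t - 1) * ψ t (n + 1))
    (h1 : ∀ t n, φ (t + 1) n = φ t n - μ t * φ t (n + 1)) (t n : ℤ) :
    P t * φ t n = φ (t + 1) n - μ t * φ (t + 1) (n - 1) := by
  have e1 := h1 (t - 1) n
  have e4 := h4 t (n - 1)
  have e2 := P_mul_phi_sub_one_eq h6 h4 t (n + 1)
  rw [sub_add_cancel] at e1 e4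
  rw [add_sub_cancel_right] at e2
  linear_combination P t * e1 + P_mul_phi_sub_one_eq h6 h4 t n - μ (t - 1) * e2 - h4 t n +
    μ t * e4

end ScalarRelations

section Casorati

variable {N : ℕ}

theorem casorati_mul_lowerBidiagonal {R : Type*} [CommRing R] {φ ψ : Fin N → ℤ → ℤ → R}
    {μ : ℤ → R} (h4 : ∀ i t n, φ i (t + 1) n = ψ i t n - μ (t - 1) * ψ i t (n + 1)) (t n : ℤ) :
    (of fun i j : Fin N => ψ i t (n + j)) * lowerBidiagonal 1 (-μ (t - 1)) =
      of fun i j : Fin N => if (j : ℕ) = N - 1 then ψ i t (n + j) else φ i (t + 1) (n + j) := by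
  ext i j
  rw [mul_lowerBidiagonal_apply]
  simp only [of_apply, Pi.one_apply, mul_one]
  by_cases hj : (j : ℕ) = N - 1
  · rw [dif_neg (by omega), if_pos hj, add_zero]
  · rw [dif_pos (by omega), if_neg hj, h4]
    push_cast
    rw [← add_assoc]
    ring

theorem mul_transpose_lowerBidiagonal_eq {K : Type*} [Field K] (hN : 2 ≤ N)
    {φ ψ : Fin N → ℤ → ℤ → K} {μ : ℤ → K} {P : Fin N → ℤ → K} (hP : ∀ i t, P i t ≠ 0)
    (h6 : ∀ i t n, (1 - μ t * μ (t - 1)) * ψ i t n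
          = P i t * φ i (t - 1) n + μ t * φ i (t + 1) (n - 1))
    (h4 : ∀ i t n, φ i (t + 1) n = ψ i t n - μ (t - 1) * ψ i t (n + 1))
    (h1 : ∀ i t n, φ i (t + 1) n = φ i t n - μ t * φ i t (n + 1)) (t n : ℤ) :
    (of fun i j : Fin N => if (j : ℕ) = N - 1 then ψ i t (n + j) else φ i (t + 1) (n + j)) *
        (lowerBidiagonal (Pi.mulSingle ⟨N - 1, by omega⟩ (1 - μ (t - 1) * μ t)) (-μ t))ᵀ =
      diagonal (fun i => P i t) * of fun i j : Fin N =>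
        if (j : ℕ) = 0 then (P i t)⁻¹ * φ i (t + 1) n
        else if (j : ℕ) = N - 1 then φ i (t - 1) (n + (j : ℤ))
        else φ i t (n + (j : ℤ)) := by
  ext i j
  rw [mul_transpose_lowerBidiagonal_apply, diagonal_mul]
  simp only [of_apply, Pi.mulSingle_apply, Fin.ext_iff]
  have hcast (hj : 0 < (j : ℕ)) : n + ((j - 1 : ℕ) : ℤ) = n + j - 1 := by omega
  by_cases hj0 : (j : ℕ) = 0
  · rw [dif_neg (by omega), if_pos hj0, if_neg (by omega), if_neg (by omega), hj0]
    field_simp [hP i t]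
    simp
  by_cases hjN : (j : ℕ) = N - 1
  · rw [dif_pos (by omega), if_neg hj0, if_pos hjN, if_pos hjN, if_pos hjN, if_neg (by omega),
      hcast (by omega)]
    linear_combination h6 i t (n + j)
  · rw [dif_pos (by omega), if_neg hj0, if_neg hjN, if_neg hjN, if_neg hjN, if_neg (by omega),
      hcast (by omega), P_mul_phi_eq (h6 i) (h4 i) (h1 i)]
    ring

end Casorati

open Matrix in
/-- difference formula (dif6) for the auxiliary τ-function σ. -/
theorem stmt_10 (N : ℕ) (hN : 2 ≤ N) (φ ψ : Fin N → ℤ → ℤ → ℂ) (μ : ℤ → ℂ)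
    (P : Fin N → ℤ → ℂ) (hP : ∀ i t, P i t ≠ 0)
    (h6 : ∀ i t n, (1 - μ t * μ (t - 1)) * ψ i t n
          = P i t * φ i (t - 1) n + μ t * φ i (t + 1) (n - 1))
    (h4 : ∀ i t n, φ i (t + 1) n = ψ i t n - μ (t - 1) * ψ i t (n + 1))
    (h1 : ∀ i t n, φ i (t + 1) n = φ i t n - μ t * φ i t (n + 1)) :
    ∀ t n : ℤ,
      (1 - μ (t - 1) * μ t) * (∏ i, P i t)⁻¹ *
          Matrix.det (Matrix.of fun i j : Fin N => ψ i t (n + (j : ℤ)))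
      = Matrix.det (Matrix.of fun i j : Fin N =>
          if (j : ℕ) = 0 then (P i t)⁻¹ * φ i (t + 1) n
          else if (j : ℕ) = N - 1 then φ i (t - 1) (n + (j : ℤ))
          else φ i t (n + (j : ℤ))) := by
  intro t n
  have hdet := congrArg det (mul_transpose_lowerBidiagonal_eq hN hP h6 h4 h1 t n)
  rw [← casorati_mul_lowerBidiagonal h4] at hdet
  simp only [det_mul, det_transpose, det_lowerBidiagonal, Pi.one_apply, Finset.prod_const_one,
    Finset.prod_pi_mulSingle', Finset.mem_univ, if_true, mul_one, det_diagonal] at hdet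
  have hprod : ∏ i, P i t ≠ 0 := Finset.prod_ne_zero_iff.mpr fun i _ => hP i t
  apply mul_left_cancel₀ hprod
  rw [← hdet]
  field_simp
end

section
/- Let τ_n^t = det(φ_i^t(n+j-1))_{1≤i,j≤N} and σ_n^t = det(ψ_i^t(n+j-1))_{1≤i,j≤N}, where φ_i and ψ_i satisfy the linear relations φ_i^{t+1}(n) = φ_i^t(n) - μ_t φ_i^t(n+1), ψ_i^t(n) = φ_i^{t-1}(n) - μ_t φ_i^{t-1}(n+1), and P_i^t φ_i^{t-1}(n) = ψ_i^t(n) - μ_t ψ_i^t(n-1), with P_i^t = (1 - p_i μ_t)(1 - p_i^{-1} μ_t) ≠ 0. Then the bilinear equation τ_n^{t-1} τ_n^{t+1} - τ_n^t σ_n^t = μ_{t-1} μ_t (τ_{n-1}^{t+1} τ_{n+1}^{t-1} - τ_n^t σ_n^t) holds for all n and t. -/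
open Matrix


/-- cofactor formula for adjugate entries -/
theorem adj_cof {R : Type*} [CommRing R] {m : ℕ} (M : Matrix (Fin (m+1)) (Fin (m+1)) R)
    (i j : Fin (m+1)) :
    adjugate M i j = (-1) ^ ((i : ℕ) + (j : ℕ)) * det (M.submatrix j.succAbove i.succAbove) := by
  rw [Matrix.adjugate_apply, Matrix.det_succ_row _ j]
  rw [Finset.sum_eq_single i]
  · have hsub : (M.updateRow j (Pi.single i 1)).submatrix j.succAbove i.succAbove
        = M.submatrix j.succAbove i.succAbove := by
      ext r c
      simp [Matrix.submatrix_apply, Matrix.updateRow_ne (Fin.succAbove_ne j r)]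
    rw [hsub]
    simp [Matrix.updateRow_self, Pi.single_eq_same, add_comm (i : ℕ) (j : ℕ)]
  · intro k _ hk
    simp [Matrix.updateRow_self, Pi.single_eq_of_ne hk]
  · intro h
    exact absurd (Finset.mem_univ i) h

/-- determinant of a matrix whose first and last rows are `d eₒ`, `d e_last`. -/
theorem det_double_corner {R : Type*} [CommRing R] {m : ℕ} (d : R)
    (M : Matrix (Fin (m+2)) (Fin (m+2)) R) :
    det (Matrix.of fun i j : Fin (m+2) =>
        if i = 0 then (if j = 0 then d else 0)
        else if i = Fin.last (m+1) then (if j = Fin.last (m+1) then d else 0)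
        else M i j)
    = d * (d * det (M.submatrix (fun k : Fin m => (k.castSucc).succ)
        (fun k : Fin m => (k.castSucc).succ))) := by
  set Y : Matrix (Fin (m+2)) (Fin (m+2)) R := Matrix.of (fun i j : Fin (m+2) =>
      if i = 0 then (if j = 0 then d else 0)
      else if i = Fin.last (m+1) then (if j = Fin.last (m+1) then d else 0)
      else M i j) with hY
  have hY0 : ∀ j, Y 0 j = if j = 0 then d else 0 := by
    intro j; simp [hY]
  have hZ : ∀ j : Fin (m+1), (Y.submatrix Fin.succ Fin.succ) (Fin.last m) j
      = if j = Fin.last m then d else 0 := by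
    intro j
    have h1 : ((Fin.last m).succ : Fin (m+2)) = Fin.last (m+1) := Fin.succ_last m
    have h2 : ((Fin.last m).succ : Fin (m+2)) ≠ 0 := Fin.succ_ne_zero _
    simp only [Matrix.submatrix_apply, hY, Matrix.of_apply, h1]
    simp only [if_neg h2, if_true, eq_self_iff_true]
    by_cases hj : j = Fin.last m
    · subst hj
      rw [if_pos rfl]
      rw [if_neg (show (Fin.last (m+1) : Fin (m+2)) ≠ 0 by simp [Fin.ext_iff])]
      rw [if_pos (Fin.succ_last m)]
    · have hsne : j.succ ≠ Fin.last (m+1) := by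
        rw [← Fin.succ_last]
        exact fun h => hj (Fin.succ_injective _ h)
      rw [if_neg hj]
      rw [if_neg (show (Fin.last (m+1) : Fin (m+2)) ≠ 0 by simp [Fin.ext_iff])]
      rw [if_neg hsne]
  rw [Matrix.det_succ_row_zero Y]
  rw [Finset.sum_congr rfl (fun j _ => by rw [hY0 j])]
  rw [Finset.sum_eq_single 0]
  · rw [if_pos rfl]
    simp only [Fin.val_zero, pow_zero, one_mul, Fin.succAbove_zero]
    rw [Matrix.det_succ_row (Y.submatrix Fin.succ Fin.succ) (Fin.last m)]
    rw [Finset.sum_congr rfl (fun j _ => by rw [hZ j])]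
    rw [Finset.sum_eq_single (Fin.last m)]
    · rw [if_pos rfl]
      have hsign : ((-1 : R)) ^ ((Fin.last m : ℕ) + (Fin.last m : ℕ)) = 1 := by
        rw [Fin.val_last, ← two_mul, pow_mul]; norm_num
      rw [hsign, Fin.succAbove_last]
      have hsub2 : ((Y.submatrix Fin.succ Fin.succ).submatrix Fin.castSucc Fin.castSucc)
          = M.submatrix (fun k : Fin m => (k.castSucc).succ)
              (fun k : Fin m => (k.castSucc).succ) := by
        ext r c
        simp only [Matrix.submatrix_apply, hY, Matrix.of_apply]
        have hr0 : ((r.castSucc).succ : Fin (m+2)) ≠ 0 := Fin.succ_ne_zero _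
        have hrl : ((r.castSucc).succ : Fin (m+2)) ≠ Fin.last (m+1) := by
          rw [← Fin.succ_last]
          intro h
          have := Fin.succ_injective _ h
          exact absurd this (Fin.ne_last_of_lt (Fin.castSucc_lt_last r))
        rw [if_neg hr0, if_neg hrl]
      rw [hsub2]
      ring
    · intro k _ hk
      rw [if_neg hk]; ring
    · intro h; exact absurd (Finset.mem_univ _) h
  · intro k _ hk
    rw [if_neg hk]; ring
  · intro h; exact absurd (Finset.mem_univ _) h

/-- Desnanot–Jacobi (Dodgson condensation), multiplied by `det M`
(so that it holds over any commutative ring). -/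
theorem dj_mul {R : Type*} [CommRing R] {m : ℕ} (M : Matrix (Fin (m+2)) (Fin (m+2)) R) :
    det M * (det M * det (M.submatrix (fun k : Fin m => (k.castSucc).succ)
        (fun k : Fin m => (k.castSucc).succ)))
    = det M * (det (M.submatrix Fin.succ Fin.succ) * det (M.submatrix Fin.castSucc Fin.castSucc)
      - det (M.submatrix Fin.succ Fin.castSucc) * det (M.submatrix Fin.castSucc Fin.succ)) := by
  classical
  have h0l : (0 : Fin (m+2)) ≠ Fin.last (m+1) := by
    simp [Fin.ext_iff]
  set l : Fin (m+2) := Fin.last (m+1) with hl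
  set d := det M with hd
  set B : Matrix (Fin (m+2)) (Fin (m+2)) R :=
    Matrix.of (fun i j => if i = 0 then adjugate M 0 j else if i = l then adjugate M l j
      else (if i = j then (1:R) else 0)) with hB
  have hBM : B * M = Matrix.of (fun i j =>
      if i = 0 then (if j = 0 then d else 0) else if i = l then (if j = l then d else 0)
      else M i j) := by
    ext i j
    simp only [Matrix.mul_apply, hB, Matrix.of_apply]
    by_cases hi0 : i = 0
    · subst hi0
      simp only [eq_self_iff_true, if_true]
      have := congrFun (congrFun (Matrix.adjugate_mul M) 0) j
      simp only [Matrix.mul_apply, Matrix.smul_apply, Matrix.one_apply, smul_eq_mul] at this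
      rw [this]
      by_cases hj : j = 0
      · subst hj; simp [hd]
      · simp [Ne.symm hj, hj]
    · by_cases hil : i = l
      · subst hil
        simp only [if_neg hi0, eq_self_iff_true, if_true]
        have := congrFun (congrFun (Matrix.adjugate_mul M) l) j
        simp only [Matrix.mul_apply, Matrix.smul_apply, Matrix.one_apply, smul_eq_mul] at this
        rw [this]
        by_cases hj : j = l
        · subst hj; simp [hd]
        · simp [Ne.symm hj, hj]
      · simp only [if_neg hi0, if_neg hil]
        rw [Finset.sum_eq_single i]
        · simp
        · intro k _ hk; simp [Ne.symm hk]
        · intro h; exact absurd (Finset.mem_univ i) h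
  have hdetBM : det (B * M) = d * (d * det (M.submatrix (fun k : Fin m => (k.castSucc).succ)
      (fun k : Fin m => (k.castSucc).succ))) := by
    rw [hBM]
    exact det_double_corner d M
  have hdetB : det B = det (M.submatrix Fin.succ Fin.succ) * det (M.submatrix Fin.castSucc Fin.castSucc)
      - det (M.submatrix Fin.succ Fin.castSucc) * det (M.submatrix Fin.castSucc Fin.succ) := by
    have hBdecomp : B = 1 + (Matrix.of fun i (s : Fin 2) =>
        if s = 0 then (if i = (0:Fin (m+2)) then (1:R) else 0) else (if i = l then 1 else 0)) *
        (Matrix.of fun (s : Fin 2) j => if s = 0 then adjugate M 0 j - (1:Matrix (Fin (m+2)) (Fin (m+2)) R) 0 j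
          else adjugate M l j - (1:Matrix (Fin (m+2)) (Fin (m+2)) R) l j) := by
      ext i j
      simp only [Matrix.add_apply, Matrix.mul_apply, Fin.sum_univ_two, Matrix.of_apply, hB]
      by_cases hi0 : i = 0
      · subst hi0
        simp [Matrix.one_apply, Ne.symm h0l, h0l]
      · by_cases hil : i = l
        · subst hil
          simp [Matrix.one_apply, Ne.symm h0l, h0l, hi0]
        · simp [Matrix.one_apply, hi0, hil]
    rw [hBdecomp, Matrix.det_one_add_mul_comm]
    have h2x2 : (1 : Matrix (Fin 2) (Fin 2) R) + (Matrix.of fun (s : Fin 2) j =>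
          if s = 0 then adjugate M 0 j - (1:Matrix (Fin (m+2)) (Fin (m+2)) R) 0 j
          else adjugate M l j - (1:Matrix (Fin (m+2)) (Fin (m+2)) R) l j) *
        (Matrix.of fun i (s : Fin 2) =>
          if s = 0 then (if i = (0:Fin (m+2)) then (1:R) else 0) else (if i = l then 1 else 0))
        = !![adjugate M 0 0, adjugate M 0 l; adjugate M l 0, adjugate M l l] := by
      ext s t
      simp only [Matrix.add_apply, Matrix.mul_apply, Matrix.of_apply]
      fin_cases s <;> fin_cases t <;>
        · rw [Finset.sum_congr rfl (fun k _ => by rw [mul_ite, mul_ite, mul_one, mul_zero])]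
          simp [Finset.sum_ite_eq', Matrix.one_apply, h0l, Ne.symm h0l]
    rw [h2x2, Matrix.det_fin_two_of]
    rw [adj_cof M 0 0, adj_cof M 0 l, adj_cof M l 0, adj_cof M l l]
    simp only [Fin.val_zero, Fin.succAbove_zero, hl, Fin.val_last, Fin.succAbove_last,
      Nat.add_zero, Nat.zero_add, pow_zero, one_mul]
    have s1 : ((-1 : R)) ^ ((m+1) + (m+1)) = 1 := by
      rw [← two_mul, pow_mul]; norm_num
    have s3 : ((-1 : R)) ^ (m+1) * ((-1 : R)) ^ (m+1) = 1 := by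
      rw [← pow_add, ← two_mul, pow_mul]; norm_num
    rw [s1]
    linear_combination (- det (M.submatrix Fin.castSucc Fin.succ) *
      det (M.submatrix Fin.succ Fin.castSucc)) * s3
  calc d * (d * det (M.submatrix _ _)) = det (B * M) := hdetBM.symm
    _ = det B * d := by rw [Matrix.det_mul, hd]
    _ = d * _ := by rw [hdetB]; ring

/-- Desnanot–Jacobi over ℂ. -/
theorem dj {m : ℕ} (M : Matrix (Fin (m+2)) (Fin (m+2)) ℂ) :
    det M * det (M.submatrix (fun k : Fin m => (k.castSucc).succ)
        (fun k : Fin m => (k.castSucc).succ))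
    = det (M.submatrix Fin.succ Fin.succ) * det (M.submatrix Fin.castSucc Fin.castSucc)
      - det (M.submatrix Fin.succ Fin.castSucc) * det (M.submatrix Fin.castSucc Fin.succ) := by
  set X := Matrix.mvPolynomialX (Fin (m+2)) (Fin (m+2)) ℤ with hXdef
  have hXd : det X ≠ 0 := Matrix.det_mvPolynomialX_ne_zero _ _
  have hgen : det X * det (X.submatrix (fun k : Fin m => (k.castSucc).succ)
        (fun k : Fin m => (k.castSucc).succ))
      = det (X.submatrix Fin.succ Fin.succ) * det (X.submatrix Fin.castSucc Fin.castSucc)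
      - det (X.submatrix Fin.succ Fin.castSucc) * det (X.submatrix Fin.castSucc Fin.succ) :=
    mul_left_cancel₀ hXd (dj_mul X)
  set f : MvPolynomial (Fin (m+2) × Fin (m+2)) ℤ →+* ℂ :=
    MvPolynomial.eval₂Hom (Int.castRingHom ℂ) (fun p => M p.1 p.2) with hf
  have hmap : X.map ⇑f = M := by
    rw [hXdef, hf]
    exact Matrix.mvPolynomialX_map_eval₂ (Int.castRingHom ℂ) M
  have := congrArg f hgen
  simpa only [_root_.map_mul, _root_.map_sub, RingHom.map_det, RingHom.mapMatrix_apply,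
    ← Matrix.submatrix_map, hmap] using this


/-- Absorb differences: matrix with top row `1, x, x², …` -/
theorem absorbL {m : ℕ} (A : Matrix (Fin (m+1)) (Fin (m+1)) ℂ) (x : ℂ)
    (hu : ∀ j, A 0 j = x ^ (j : ℕ)) :
    det A = det (Matrix.of fun i j : Fin m =>
      A i.succ j.succ - x * A i.succ j.castSucc) := by
  classical
  set S : Matrix (Fin (m+1)) (Fin (m+1)) ℂ :=
    Matrix.of (fun j k : Fin (m+1) => if (j:ℕ) + 1 = (k:ℕ) then (1:ℂ) else 0) with hS
  set V : Matrix (Fin (m+1)) (Fin (m+1)) ℂ := 1 - x • S with hV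
  have hVtri : V.BlockTriangular id := by
    intro i j hij
    have hij' : (j:ℕ) < (i:ℕ) := hij
    simp only [hV, Matrix.sub_apply, Matrix.smul_apply, hS, Matrix.of_apply,
      Matrix.one_apply, smul_eq_mul]
    rw [if_neg (by omega : ¬ (i:ℕ) + 1 = (j:ℕ)), if_neg (by
      intro h; subst h; omega)]
    ring
  have hVdet : det V = 1 := by
    rw [Matrix.det_of_upperTriangular hVtri]
    apply Finset.prod_eq_one
    intro i _
    simp only [hV, Matrix.sub_apply, Matrix.smul_apply, hS, Matrix.of_apply,
      Matrix.one_apply, smul_eq_mul]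
    rw [if_pos trivial, if_neg (by omega)]
    ring
  have hAS : ∀ (i : Fin (m+1)) (k : Fin (m+1)), (A * S) i k
      = Fin.cases 0 (fun k' : Fin m => A i k'.castSucc) k := by
    intro i k
    induction k using Fin.cases with
    | zero =>
      simp only [Matrix.mul_apply, hS, Matrix.of_apply, Fin.val_zero]
      rw [Finset.sum_eq_zero]
      · simp
      · intro j _
        simp only [Nat.add_one_ne_zero, if_false]
        ring
    | succ k' =>
      simp only [Matrix.mul_apply, hS, Matrix.of_apply, Fin.cases_succ]
      have hsum : ∀ j : Fin (m+1),
          (A i j * if (j:ℕ) + 1 = ((k'.succ : Fin (m+1)) : ℕ) then (1:ℂ) else 0)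
          = if j = k'.castSucc then A i j else 0 := by
        intro j
        by_cases hj : j = k'.castSucc
        · subst hj
          rw [if_pos (by rw [Fin.val_succ, Fin.coe_castSucc]), if_pos rfl, mul_one]
        · rw [if_neg (by
            rw [Fin.val_succ]
            intro h
            apply hj
            apply Fin.ext
            rw [Fin.coe_castSucc]
            omega), if_neg hj, mul_zero]
      rw [Finset.sum_congr rfl (fun j _ => hsum j)]
      rw [Finset.sum_ite_eq' Finset.univ k'.castSucc (fun j => A i j)]
      simp
  have hAV : ∀ (i k : Fin (m+1)), (A * V) i k
      = A i k - x * (Fin.cases 0 (fun k' : Fin m => A i k'.castSucc) k) := by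
    intro i k
    rw [hV, Matrix.mul_sub, Matrix.mul_one, Matrix.mul_smul, Matrix.sub_apply,
      Matrix.smul_apply, hAS, smul_eq_mul]
  have hdet : det A = det (A * V) := by
    rw [Matrix.det_mul, hVdet, mul_one]
  rw [hdet, Matrix.det_succ_row_zero]
  have h0 : ∀ j, (A * V) 0 j = if j = 0 then 1 else 0 := by
    intro j
    induction j using Fin.cases with
    | zero => rw [hAV]; simp [hu 0]
    | succ j' =>
      rw [hAV]
      simp only [Fin.cases_succ, hu]
      rw [if_neg (Fin.succ_ne_zero j')]
      rw [Fin.val_succ, pow_succ, Fin.coe_castSucc]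
      ring
  rw [Finset.sum_congr rfl (fun j _ => by rw [h0 j])]
  rw [Finset.sum_eq_single 0]
  · rw [if_pos rfl]
    simp only [Fin.val_zero, pow_zero, one_mul, mul_one, Fin.succAbove_zero]
    apply congrArg
    ext i j
    simp only [Matrix.submatrix_apply, Matrix.of_apply, hAV, Fin.cases_succ]
  · intro k _ hk
    rw [if_neg hk]; ring
  · intro h; exact absurd (Finset.mem_univ _) h

/-- Absorb differences: matrix with bottom row `…, x², x, 1`. -/
theorem absorbR {m : ℕ} (A : Matrix (Fin (m+1)) (Fin (m+1)) ℂ) (x : ℂ)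
    (hw : ∀ j, A (Fin.last m) j = x ^ (m - (j : ℕ))) :
    det A = det (Matrix.of fun i j : Fin m =>
      A i.castSucc j.castSucc - x * A i.castSucc j.succ) := by
  classical
  set S : Matrix (Fin (m+1)) (Fin (m+1)) ℂ :=
    Matrix.of (fun j k : Fin (m+1) => if (j:ℕ) = (k:ℕ) + 1 then (1:ℂ) else 0) with hS
  set V : Matrix (Fin (m+1)) (Fin (m+1)) ℂ := 1 - x • S with hV
  have hVtri : V.BlockTriangular OrderDual.toDual := by
    intro i j hij
    have hij' : (i:ℕ) < (j:ℕ) := hij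
    simp only [hV, Matrix.sub_apply, Matrix.smul_apply, hS, Matrix.of_apply,
      Matrix.one_apply, smul_eq_mul]
    rw [if_neg (by omega : ¬ (i:ℕ) = (j:ℕ) + 1), if_neg (by
      intro h; subst h; omega)]
    ring
  have hVdet : det V = 1 := by
    rw [Matrix.det_of_lowerTriangular V hVtri]
    apply Finset.prod_eq_one
    intro i _
    simp only [hV, Matrix.sub_apply, Matrix.smul_apply, hS, Matrix.of_apply,
      Matrix.one_apply, smul_eq_mul]
    rw [if_pos trivial, if_neg (by omega)]
    ring
  have hAS : ∀ (i : Fin (m+1)) (k : Fin (m+1)), (A * S) i k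
      = Fin.lastCases 0 (fun k' : Fin m => A i k'.succ) k := by
    intro i k
    induction k using Fin.lastCases with
    | last =>
      simp only [Matrix.mul_apply, hS, Matrix.of_apply, Fin.val_last, Fin.lastCases_last]
      rw [Finset.sum_eq_zero]
      intro j _
      rw [if_neg (by have := j.isLt; omega)]
      ring
    | cast k' =>
      simp only [Matrix.mul_apply, hS, Matrix.of_apply, Fin.lastCases_castSucc]
      have hsum : ∀ j : Fin (m+1),
          (A i j * if (j:ℕ) = ((k'.castSucc : Fin (m+1)) : ℕ) + 1 then (1:ℂ) else 0)
          = if j = k'.succ then A i j else 0 := by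
        intro j
        by_cases hj : j = k'.succ
        · subst hj
          rw [if_pos (by rw [Fin.val_succ, Fin.coe_castSucc]), if_pos rfl, mul_one]
        · rw [if_neg (by
            rw [Fin.coe_castSucc]
            intro h
            apply hj
            apply Fin.ext
            rw [Fin.val_succ]
            omega), if_neg hj, mul_zero]
      rw [Finset.sum_congr rfl (fun j _ => hsum j)]
      rw [Finset.sum_ite_eq' Finset.univ k'.succ (fun j => A i j)]
      simp
  have hAV : ∀ (i k : Fin (m+1)), (A * V) i k
      = A i k - x * (Fin.lastCases 0 (fun k' : Fin m => A i k'.succ) k) := by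
    intro i k
    rw [hV, Matrix.mul_sub, Matrix.mul_one, Matrix.mul_smul, Matrix.sub_apply,
      Matrix.smul_apply, hAS, smul_eq_mul]
  have hdet : det A = det (A * V) := by
    rw [Matrix.det_mul, hVdet, mul_one]
  rw [hdet, Matrix.det_succ_row _ (Fin.last m)]
  have h0 : ∀ j, (A * V) (Fin.last m) j = if j = Fin.last m then 1 else 0 := by
    intro j
    induction j using Fin.lastCases with
    | last =>
      rw [hAV]
      simp only [Fin.lastCases_last, hw, Fin.val_last, Nat.sub_self, pow_zero]
      simp
    | cast j' =>
      rw [hAV]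
      simp only [Fin.lastCases_castSucc, hw]
      rw [if_neg (by
        intro h
        exact absurd h (Fin.ne_last_of_lt (Fin.castSucc_lt_last j')))]
      rw [Fin.coe_castSucc, Fin.val_succ]
      have hlt : (j' : ℕ) < m := j'.isLt
      rw [show m - (j':ℕ) = (m - ((j':ℕ)+1)) + 1 by omega, pow_succ]
      ring
  rw [Finset.sum_congr rfl (fun j _ => by rw [h0 j])]
  rw [Finset.sum_eq_single (Fin.last m)]
  · rw [if_pos rfl]
    have hsign : ((-1 : ℂ)) ^ ((Fin.last m : ℕ) + (Fin.last m : ℕ)) = 1 := by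
      rw [Fin.val_last, ← two_mul, pow_mul]; norm_num
    rw [hsign, Fin.succAbove_last]
    simp only [one_mul, mul_one]
    apply congrArg
    ext i j
    simp only [Matrix.submatrix_apply, Matrix.of_apply, hAV, Fin.lastCases_castSucc]
  · intro k _ hk
    rw [if_neg hk]; ring
  · intro h; exact absurd (Finset.mem_univ _) h

theorem row_scal {m : ℕ} (A : Matrix (Fin m) (Fin m) ℂ) (r : Fin m) (c : ℂ) (v : Fin m → ℂ)
    (h : ∀ j, A r j = c * v j) :
    det A = c * det (A.updateRow r v) := by
  have h1 : A = (A.updateRow r v).updateRow r (c • v) := by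
    ext i j
    by_cases hi : i = r
    · subst hi
      rw [Matrix.updateRow_self]
      simp [h j]
    · rw [Matrix.updateRow_ne hi, Matrix.updateRow_ne hi]
  have h2 : (A.updateRow r v).updateRow r v = A.updateRow r v := by
    ext i j
    by_cases hi : i = r
    · subst hi
      rw [Matrix.updateRow_self, Matrix.updateRow_self]
    · rw [Matrix.updateRow_ne hi, Matrix.updateRow_ne hi]
  conv_lhs => rw [h1]
  rw [Matrix.det_updateRow_smul, h2]

/-- The universal bilinear identity. -/
theorem keyA {N : ℕ} (Ψ : Fin N → ℤ → ℂ) (a b : ℂ) (n : ℤ) :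
    det (Matrix.of fun i j : Fin N => Ψ i (n + (j:ℕ)) - b * Ψ i (n - 1 + (j:ℕ))) *
      det (Matrix.of fun i j : Fin N => Ψ i (n + (j:ℕ)) - a * Ψ i (n + 1 + (j:ℕ))) -
    det (Matrix.of fun i j : Fin N => (1 + a*b) * Ψ i (n + (j:ℕ))
        - b * Ψ i (n - 1 + (j:ℕ)) - a * Ψ i (n + 1 + (j:ℕ))) *
      det (Matrix.of fun i j : Fin N => Ψ i (n + (j:ℕ)))
    = a * b *
      (det (Matrix.of fun i j : Fin N => Ψ i (n - 1 + (j:ℕ)) - a * Ψ i (n + (j:ℕ))) *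
        det (Matrix.of fun i j : Fin N => Ψ i (n + 1 + (j:ℕ)) - b * Ψ i (n + (j:ℕ))) -
      det (Matrix.of fun i j : Fin N => (1 + a*b) * Ψ i (n + (j:ℕ))
          - b * Ψ i (n - 1 + (j:ℕ)) - a * Ψ i (n + 1 + (j:ℕ))) *
        det (Matrix.of fun i j : Fin N => Ψ i (n + (j:ℕ)))) := by
  classical
  set B : Matrix (Fin (N+2)) (Fin (N+2)) ℂ :=
    Matrix.of (fun i j : Fin (N+2) =>
      Fin.cases (b ^ (j:ℕ))
        (fun i' => Fin.lastCases (a ^ (N+1-(j:ℕ)))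
          (fun i'' => Ψ i'' (n - 1 + ((j:ℕ):ℤ))) i') i) with hBdef
  have hB0 : ∀ j : Fin (N+2), B 0 j = b ^ (j:ℕ) := by
    intro j
    simp only [hBdef, Matrix.of_apply, Fin.cases_zero]
  have hBw : ∀ j : Fin (N+2), B ((Fin.last N).succ) j = a ^ (N+1-(j:ℕ)) := by
    intro j
    simp only [hBdef, Matrix.of_apply, Fin.cases_succ, Fin.lastCases_last]
  have hBd : ∀ (i : Fin N) (j : Fin (N+2)),
      B ((i.castSucc).succ) j = Ψ i (n - 1 + ((j:ℕ):ℤ)) := by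
    intro i j
    simp only [hBdef, Matrix.of_apply, Fin.cases_succ, Fin.lastCases_castSucc]
  -- inner minor
  have hInner : B.submatrix (fun k : Fin N => (k.castSucc).succ)
      (fun k : Fin N => (k.castSucc).succ)
      = Matrix.of (fun i j : Fin N => Ψ i (n + (j:ℕ))) := by
    ext i j
    simp only [Matrix.submatrix_apply, Matrix.of_apply, hBd]
    congr 1
    simp only [Fin.val_succ, Fin.coe_castSucc]
    push_cast
    ring
  -- corner succ succ
  have hC00 : det (B.submatrix Fin.succ Fin.succ)
      = det (Matrix.of fun i j : Fin N => Ψ i (n + (j:ℕ)) - a * Ψ i (n + 1 + (j:ℕ))) := by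
    rw [absorbR (B.submatrix Fin.succ Fin.succ) a (fun j => by
      rw [Matrix.submatrix_apply, hBw]
      congr 1
      simp only [Fin.val_succ]
      omega)]
    congr 1
    ext i j
    simp only [Matrix.of_apply, Matrix.submatrix_apply]
    simp only [hBd]
    simp only [Fin.val_succ, Fin.coe_castSucc]
    push_cast
    ring_nf
  -- corner castSucc castSucc
  have hCll : det (B.submatrix Fin.castSucc Fin.castSucc)
      = det (Matrix.of fun i j : Fin N => Ψ i (n + (j:ℕ)) - b * Ψ i (n - 1 + (j:ℕ))) := by
    rw [absorbL (B.submatrix Fin.castSucc Fin.castSucc) b (fun j => by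
      rw [Matrix.submatrix_apply, Fin.castSucc_zero, hB0]
      rw [Fin.coe_castSucc])]
    congr 1
    ext i j
    simp only [Matrix.of_apply, Matrix.submatrix_apply, ← Fin.succ_castSucc]
    simp only [hBd]
    simp only [Fin.val_succ, Fin.coe_castSucc]
    push_cast
    ring_nf
  -- corner succ castSucc (c0l)
  have hC0l : det (B.submatrix Fin.succ Fin.castSucc)
      = a * det (Matrix.of fun i j : Fin N => Ψ i (n - 1 + (j:ℕ)) - a * Ψ i (n + (j:ℕ))) := by
    rw [row_scal (B.submatrix Fin.succ Fin.castSucc) (Fin.last N) a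
      (fun j => a ^ (N - (j:ℕ))) (fun j => by
        rw [Matrix.submatrix_apply, hBw, Fin.coe_castSucc, ← pow_succ']
        congr 1
        omega)]
    congr 1
    rw [absorbR _ a (fun j => by rw [Matrix.updateRow_self])]
    congr 1
    ext i j
    have hne : (i.castSucc : Fin (N+1)) ≠ Fin.last N :=
      Fin.ne_last_of_lt (Fin.castSucc_lt_last i)
    simp only [Matrix.of_apply, Matrix.updateRow_ne hne, Matrix.submatrix_apply]
    simp only [hBd]
    simp only [Fin.val_succ, Fin.coe_castSucc]
    push_cast
    ring_nf
  -- corner castSucc succ (cl0)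
  have hCl0 : det (B.submatrix Fin.castSucc Fin.succ)
      = b * det (Matrix.of fun i j : Fin N => Ψ i (n + 1 + (j:ℕ)) - b * Ψ i (n + (j:ℕ))) := by
    rw [row_scal (B.submatrix Fin.castSucc Fin.succ) 0 b
      (fun j => b ^ ((j:ℕ))) (fun j => by
        rw [Matrix.submatrix_apply, Fin.castSucc_zero, hB0, Fin.val_succ, pow_succ'])]
    congr 1
    rw [absorbL _ b (fun j => by rw [Matrix.updateRow_self])]
    congr 1
    ext i j
    have hne : (i.succ : Fin (N+1)) ≠ 0 := Fin.succ_ne_zero i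
    simp only [Matrix.of_apply, Matrix.updateRow_ne hne, Matrix.submatrix_apply,
      ← Fin.succ_castSucc]
    simp only [hBd]
    simp only [Fin.val_succ, Fin.coe_castSucc]
    push_cast
    ring_nf
  -- det B
  have hDetB : det B = (1 - a * b) *
      det (Matrix.of fun i j : Fin N => (1 + a*b) * Ψ i (n + (j:ℕ))
        - b * Ψ i (n - 1 + (j:ℕ)) - a * Ψ i (n + 1 + (j:ℕ))) := by
    rw [absorbL B b hB0]
    rw [row_scal (Matrix.of fun i j : Fin (N+1) => B i.succ j.succ - b * B i.succ j.castSucc)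
      (Fin.last N) (1 - a * b) (fun j => a ^ (N - (j:ℕ))) (fun j => by
        simp only [Matrix.of_apply]
        rw [hBw, hBw]
        rw [Fin.val_succ, Fin.coe_castSucc]
        rw [show N + 1 - ((j:ℕ) + 1) = N - (j:ℕ) from by omega]
        rw [show N + 1 - (j:ℕ) = (N - (j:ℕ)) + 1 from by omega, pow_succ]
        ring)]
    congr 1
    rw [absorbR _ a (fun j => by rw [Matrix.updateRow_self])]
    congr 1
    ext i j
    have hne : (i.castSucc : Fin (N+1)) ≠ Fin.last N :=
      Fin.ne_last_of_lt (Fin.castSucc_lt_last i)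
    simp only [Matrix.of_apply, Matrix.updateRow_ne hne, ← Fin.succ_castSucc]
    simp only [hBd]
    simp only [Fin.val_succ, Fin.coe_castSucc]
    push_cast
    ring_nf
  have hdj := dj B
  rw [hInner, hC00, hCll, hC0l, hCl0, hDetB] at hdj
  linear_combination (-1 : ℂ) * hdj

open Matrix in
/-- first bilinear equation for the Casorati determinants. -/
theorem stmt_11 (N : ℕ) (hN : 1 ≤ N) (φ ψ : Fin N → ℤ → ℤ → ℂ) (μ : ℤ → ℂ)
    (p : Fin N → ℂ) (hμ : ∀ t, μ t ≠ 0) (hp : ∀ i, p i ≠ 0)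
    (hP : ∀ i t, (1 - p i * μ t) * (1 - (p i)⁻¹ * μ t) ≠ 0)
    (h1 : ∀ i t n, φ i (t + 1) n = φ i t n - μ t * φ i t (n + 1))
    (h2 : ∀ i t n, ψ i t n = φ i (t - 1) n - μ t * φ i (t - 1) (n + 1))
    (h3 : ∀ i t n, (1 - p i * μ t) * (1 - (p i)⁻¹ * μ t) * φ i (t - 1) n
          = ψ i t n - μ t * ψ i t (n - 1))
    (τ σ : ℤ → ℤ → ℂ)
    (hτ : ∀ t n, τ t n = Matrix.det (Matrix.of fun i j : Fin N => φ i t (n + (j : ℤ))))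
    (hσ : ∀ t n, σ t n = Matrix.det (Matrix.of fun i j : Fin N => ψ i t (n + (j : ℤ)))) :
    ∀ t n : ℤ,
      τ (t - 1) n * τ (t + 1) n - τ t n * σ t n
      = μ (t - 1) * μ t * (τ (t + 1) (n - 1) * τ (t - 1) (n + 1) - τ t n * σ t n) := by
  intro t n
  have hC : (∏ i, (1 - p i * μ t) * (1 - (p i)⁻¹ * μ t)) ≠ 0 :=
    Finset.prod_ne_zero_iff.mpr (fun i _ => hP i t)
  have hg : ∀ i m, φ i t m = φ i (t-1) m - μ (t-1) * φ i (t-1) (m+1) := by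
    intro i m
    have := h1 i (t-1) m
    rwa [sub_add_cancel] at this
  have hw1 : ∀ i m, φ i (t+1) m = ψ i t m - μ (t-1) * ψ i t (m+1) := by
    intro i m
    rw [h1 i t m, hg i m, hg i (m+1), h2 i t m, h2 i t (m+1)]
    ring
  have S1 : (∏ i, (1 - p i * μ t) * (1 - (p i)⁻¹ * μ t)) * τ (t-1) n
      = det (Matrix.of fun i j : Fin N =>
          ψ i t (n + (j:ℤ)) - μ t * ψ i t (n - 1 + (j:ℤ))) := by
    rw [hτ]
    rw [← Matrix.det_mul_column (fun i => (1 - p i * μ t) * (1 - (p i)⁻¹ * μ t))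
        (Matrix.of fun i j : Fin N => φ i (t-1) (n + (j:ℤ)))]
    congr 1
    ext i j
    simp only [Matrix.of_apply]
    rw [h3 i t (n + (j:ℤ))]
    rw [show n + (j:ℤ) - 1 = n - 1 + (j:ℤ) from by ring]
  have S2 : (∏ i, (1 - p i * μ t) * (1 - (p i)⁻¹ * μ t)) * τ (t-1) (n+1)
      = det (Matrix.of fun i j : Fin N =>
          ψ i t (n + 1 + (j:ℤ)) - μ t * ψ i t (n + (j:ℤ))) := by
    rw [hτ]
    rw [← Matrix.det_mul_column (fun i => (1 - p i * μ t) * (1 - (p i)⁻¹ * μ t))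
        (Matrix.of fun i j : Fin N => φ i (t-1) (n + 1 + (j:ℤ)))]
    congr 1
    ext i j
    simp only [Matrix.of_apply]
    rw [h3 i t (n + 1 + (j:ℤ))]
    rw [show n + 1 + (j:ℤ) - 1 = n + (j:ℤ) from by ring]
  have S3 : (∏ i, (1 - p i * μ t) * (1 - (p i)⁻¹ * μ t)) * τ t n
      = det (Matrix.of fun i j : Fin N =>
          (1 + μ (t-1) * μ t) * ψ i t (n + (j:ℤ)) - μ t * ψ i t (n - 1 + (j:ℤ))
            - μ (t-1) * ψ i t (n + 1 + (j:ℤ))) := by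
    rw [hτ]
    rw [← Matrix.det_mul_column (fun i => (1 - p i * μ t) * (1 - (p i)⁻¹ * μ t))
        (Matrix.of fun i j : Fin N => φ i t (n + (j:ℤ)))]
    congr 1
    ext i j
    simp only [Matrix.of_apply]
    have e1 : (1 - p i * μ t) * (1 - (p i)⁻¹ * μ t) * φ i t (n + (j:ℤ))
        = ((1 - p i * μ t) * (1 - (p i)⁻¹ * μ t) * φ i (t-1) (n + (j:ℤ)))
          - μ (t-1) * ((1 - p i * μ t) * (1 - (p i)⁻¹ * μ t) * φ i (t-1) (n + (j:ℤ) + 1)) := by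
      rw [hg i (n + (j:ℤ))]
      ring
    rw [e1, h3 i t (n + (j:ℤ)), h3 i t (n + (j:ℤ) + 1)]
    rw [show n + (j:ℤ) - 1 = n - 1 + (j:ℤ) from by ring]
    rw [show n + (j:ℤ) + 1 = n + 1 + (j:ℤ) from by ring]
    rw [show n + 1 + (j:ℤ) - 1 = n + (j:ℤ) from by ring]
    ring
  have S4 : τ (t+1) n = det (Matrix.of fun i j : Fin N =>
      ψ i t (n + (j:ℤ)) - μ (t-1) * ψ i t (n + 1 + (j:ℤ))) := by
    rw [hτ]
    congr 1
    ext i j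
    simp only [Matrix.of_apply]
    rw [hw1 i (n + (j:ℤ))]
    rw [show n + (j:ℤ) + 1 = n + 1 + (j:ℤ) from by ring]
  have S5 : τ (t+1) (n-1) = det (Matrix.of fun i j : Fin N =>
      ψ i t (n - 1 + (j:ℤ)) - μ (t-1) * ψ i t (n + (j:ℤ))) := by
    rw [hτ]
    congr 1
    ext i j
    simp only [Matrix.of_apply]
    rw [hw1 i (n - 1 + (j:ℤ))]
    rw [show n - 1 + (j:ℤ) + 1 = n + (j:ℤ) from by ring]
  have S6 : σ t n = det (Matrix.of fun i j : Fin N => ψ i t (n + (j:ℤ))) := hσ t n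
  have key : det (Matrix.of fun i j : Fin N =>
        ψ i t (n + (j:ℤ)) - μ t * ψ i t (n - 1 + (j:ℤ))) *
      det (Matrix.of fun i j : Fin N =>
        ψ i t (n + (j:ℤ)) - μ (t-1) * ψ i t (n + 1 + (j:ℤ))) -
      det (Matrix.of fun i j : Fin N =>
        (1 + μ (t-1) * μ t) * ψ i t (n + (j:ℤ)) - μ t * ψ i t (n - 1 + (j:ℤ))
          - μ (t-1) * ψ i t (n + 1 + (j:ℤ))) *
      det (Matrix.of fun i j : Fin N => ψ i t (n + (j:ℤ)))
      = μ (t-1) * μ t *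
      (det (Matrix.of fun i j : Fin N =>
          ψ i t (n - 1 + (j:ℤ)) - μ (t-1) * ψ i t (n + (j:ℤ))) *
        det (Matrix.of fun i j : Fin N =>
          ψ i t (n + 1 + (j:ℤ)) - μ t * ψ i t (n + (j:ℤ))) -
       det (Matrix.of fun i j : Fin N =>
          (1 + μ (t-1) * μ t) * ψ i t (n + (j:ℤ)) - μ t * ψ i t (n - 1 + (j:ℤ))
            - μ (t-1) * ψ i t (n + 1 + (j:ℤ))) *
        det (Matrix.of fun i j : Fin N => ψ i t (n + (j:ℤ)))) :=
    keyA (fun i m => ψ i t m) (μ (t-1)) (μ t) n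
  apply mul_left_cancel₀ hC
  rw [S4, S5, S6]
  linear_combination
    (det (Matrix.of fun i j : Fin N =>
        ψ i t (n + (j:ℤ)) - μ (t-1) * ψ i t (n + 1 + (j:ℤ)))) * S1
    - (det (Matrix.of fun i j : Fin N => ψ i t (n + (j:ℤ)))) * S3
    - (μ (t-1) * μ t) * (det (Matrix.of fun i j : Fin N =>
        ψ i t (n - 1 + (j:ℤ)) - μ (t-1) * ψ i t (n + (j:ℤ)))) * S2
    + (μ (t-1) * μ t) * (det (Matrix.of fun i j : Fin N => ψ i t (n + (j:ℤ)))) * S3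
    + key
end

section
/- Under the same hypotheses (Casorati determinants τ_n^t and σ_n^t built from φ_i, ψ_i satisfying the linear relations with nonzero P_i^t), the bilinear equation μ_t σ_n^t τ_{n+1}^t - μ_{t-1} τ_n^t σ_{n+1}^t = (μ_t - μ_{t-1}) τ_n^{t+1} τ_{n+1}^{t-1} holds for all n and t. -/
open Matrix Finset

namespace Stmt12

variable {n : ℕ}

lemma succAbove_val (j : Fin (n+1)) (m : Fin n) :
    ((j.succAbove m : Fin (n+1)) : ℕ) = if (m:ℕ) < (j:ℕ) then (m:ℕ) else (m:ℕ)+1 := by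
  rcases lt_or_ge ((m:ℕ)) ((j:ℕ)) with h | h
  · rw [Fin.succAbove_of_castSucc_lt _ _ (by simpa [Fin.lt_def] using h)]
    simp [h]
  · rw [Fin.succAbove_of_le_castSucc _ _ (by simpa [Fin.le_def] using h)]
    simp [Fin.val_succ, Nat.not_lt.mpr h]

lemma updateCol_of_val (F : ℕ → Fin n → ℂ) (r : ℕ) (hr : r < n) (z : Fin n → ℂ) :
    (Matrix.of fun i (j : Fin n) => F (j:ℕ) i).updateCol ⟨r,hr⟩ z
      = Matrix.of fun i (j : Fin n) => if (j:ℕ) = r then z i else F (j:ℕ) i := by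
  ext i j
  rw [Matrix.updateCol_apply]
  by_cases h : j = ⟨r, hr⟩
  · simp [h]
  · have h' : (j:ℕ) ≠ r := by simpa [Fin.ext_iff] using h
    simp [h, h']

lemma det_congr_val (F G : ℕ → Fin n → ℂ) (h : ∀ m, m < n → ∀ i, F m i = G m i) :
    det (Matrix.of fun i (j : Fin n) => F (j:ℕ) i)
      = det (Matrix.of fun i (j : Fin n) => G (j:ℕ) i) := by
  congr 1; ext i j; exact h j j.isLt i

lemma det_colop (F : ℕ → Fin n → ℂ) {r r' : ℕ} (hr : r < n) (hr' : r' < n) (hne : r ≠ r')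
    (x : ℂ) :
    det (Matrix.of fun i (j : Fin n) => if (j:ℕ) = r then F r i + x * F r' i else F (j:ℕ) i)
      = det (Matrix.of fun i (j : Fin n) => F (j:ℕ) i) := by
  have h := det_updateCol_add_smul_self (Matrix.of fun i (j : Fin n) => F (j:ℕ) i)
      (i := ⟨r,hr⟩) (j := ⟨r',hr'⟩) (by simpa [Fin.ext_iff] using hne) x
  rw [updateCol_of_val] at h
  simpa [smul_eq_mul] using h

lemma det_colscale (F : ℕ → Fin n → ℂ) {r : ℕ} (hr : r < n) (x : ℂ) (z : Fin n → ℂ) :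
    det (Matrix.of fun i (j : Fin n) => if (j:ℕ) = r then x * z i else F (j:ℕ) i)
      = x * det (Matrix.of fun i (j : Fin n) => if (j:ℕ) = r then z i else F (j:ℕ) i) := by
  have h := det_updateCol_smul (Matrix.of fun i (j : Fin n) => F (j:ℕ) i) ⟨r,hr⟩ x z
  rw [updateCol_of_val, updateCol_of_val] at h
  simpa [smul_eq_mul] using h

lemma det_colswap (F : ℕ → Fin n → ℂ) {r r' : ℕ} (hr : r < n) (hr' : r' < n) (hne : r ≠ r') :
    det (Matrix.of fun i (j : Fin n) =>
        F (if (j:ℕ) = r then r' else if (j:ℕ) = r' then r else (j:ℕ)) i)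
      = - det (Matrix.of fun i (j : Fin n) => F (j:ℕ) i) := by
  have h := det_permute' (Equiv.swap (⟨r,hr⟩ : Fin n) ⟨r',hr'⟩)
      (Matrix.of fun i (j : Fin n) => F (j:ℕ) i)
  rw [Equiv.Perm.sign_swap (by simpa [Fin.ext_iff] using hne)] at h
  have heq : (Matrix.of fun i (j : Fin n) =>
        F (if (j:ℕ) = r then r' else if (j:ℕ) = r' then r else (j:ℕ)) i)
      = (Matrix.of fun i (j : Fin n) => F (j:ℕ) i).submatrix id
          (Equiv.swap (⟨r,hr⟩ : Fin n) ⟨r',hr'⟩) := by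
    ext i j
    simp only [Matrix.submatrix_apply, Matrix.of_apply, id_eq, Equiv.swap_apply_def]
    by_cases h1 : j = ⟨r, hr⟩
    · have : (j:ℕ) = r := by simp [h1]
      simp [h1, this]
    · have h1' : (j:ℕ) ≠ r := by simpa [Fin.ext_iff] using h1
      by_cases h2 : j = ⟨r', hr'⟩
      · have : (j:ℕ) = r' := by simp [h2]
        simp [h1, h2, h1', this, Ne.symm hne]
      · have h2' : (j:ℕ) ≠ r' := by simpa [Fin.ext_iff] using h2
        simp [h1, h2, h1', h2']
  rw [heq, h]
  simp

lemma ops1 (d : ℕ → Fin n → ℂ) (x : ℂ) :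
    ∀ (r : ℕ), r < n →
    det (Matrix.of fun i (j : Fin n) =>
        if (j:ℕ) < r then d (j:ℕ) i - x * d ((j:ℕ)+1) i else d (j:ℕ) i)
      = det (Matrix.of fun i (j : Fin n) => d (j:ℕ) i)
  | 0, _ => by
      apply det_congr_val; intro m hm i; simp
  | (r+1), h => by
      have hr : r < n := Nat.lt_of_succ_lt h
      have step1 :
          det (Matrix.of fun i (j : Fin n) =>
            if (j:ℕ) < r+1 then d (j:ℕ) i - x * d ((j:ℕ)+1) i else d (j:ℕ) i)
          = det (Matrix.of fun i (j : Fin n) =>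
              if (j:ℕ) = r then
                (if r < r then d r i - x * d (r+1) i else d r i)
                + (-x) * (if r+1 < r then d (r+1) i - x * d (r+2) i else d (r+1) i)
              else (if (j:ℕ) < r then d (j:ℕ) i - x * d ((j:ℕ)+1) i else d (j:ℕ) i)) :=
        det_congr_val
          (fun m i => if m < r+1 then d m i - x * d (m+1) i else d m i)
          (fun m i => if m = r then
                (if r < r then d r i - x * d (r+1) i else d r i)
                + (-x) * (if r+1 < r then d (r+1) i - x * d (r+2) i else d (r+1) i)
              else (if m < r then d m i - x * d (m+1) i else d m i))
          (by
            intro m hm i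
            split_ifs <;> first | ring1 | (subst_vars; ring1) | (exfalso; omega)
            )
      have step2 :
          det (Matrix.of fun i (j : Fin n) =>
              if (j:ℕ) = r then
                (if r < r then d r i - x * d (r+1) i else d r i)
                + (-x) * (if r+1 < r then d (r+1) i - x * d (r+2) i else d (r+1) i)
              else (if (j:ℕ) < r then d (j:ℕ) i - x * d ((j:ℕ)+1) i else d (j:ℕ) i))
          = det (Matrix.of fun i (j : Fin n) =>
              if (j:ℕ) < r then d (j:ℕ) i - x * d ((j:ℕ)+1) i else d (j:ℕ) i) :=
        det_colop (fun m i => if m < r then d m i - x * d (m+1) i else d m i) hr h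
          (by omega) (-x)
      rw [step1, step2]
      exact ops1 d x r hr


/-- helper function used in `ops2` -/
def G (d : ℕ → Fin n → ℂ) (x y : ℂ) (r : ℕ) : ℕ → Fin n → ℂ := fun m i =>
  if m < r then d m i - x * d (m+1) i + y * d (m+2) i
  else if m = r then d r i - x * d (r+1) i else d m i

lemma ops2 (d : ℕ → Fin n → ℂ) (x y : ℂ) :
    ∀ (r : ℕ), r + 1 < n →
    det (Matrix.of fun i (j : Fin n) =>
        if (j:ℕ) < r then d (j:ℕ) i - x * d ((j:ℕ)+1) i + y * d ((j:ℕ)+2) i else d (j:ℕ) i)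
      = det (Matrix.of fun i (j : Fin n) => d (j:ℕ) i)
  | 0, _ => by
      apply det_congr_val; intro m hm i; simp
  | (r+1), h => by
      have hr2 : r + 2 < n := h
      have hr1 : r + 1 < n := by omega
      have hr : r < n := by omega
      have step1 :
          det (Matrix.of fun i (j : Fin n) =>
            if (j:ℕ) < r+1 then d (j:ℕ) i - x * d ((j:ℕ)+1) i + y * d ((j:ℕ)+2) i
            else d (j:ℕ) i)
          = det (Matrix.of fun i (j : Fin n) =>
              if (j:ℕ) = r then G d x y r r i + y * G d x y r (r+2) i
              else G d x y r (j:ℕ) i) :=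
        det_congr_val
          (fun m i => if m < r+1 then d m i - x * d (m+1) i + y * d (m+2) i else d m i)
          (fun m i => if m = r then G d x y r r i + y * G d x y r (r+2) i
              else G d x y r m i)
          (by
            intro m hm i
            show _ = if m = r then G d x y r r i + y * G d x y r (r+2) i else G d x y r m i
            unfold G
            split_ifs <;> first | ring1 | (subst_vars; ring1) | (exfalso; omega)
            )
      have step1b :
          det (Matrix.of fun i (j : Fin n) =>
              if (j:ℕ) = r then G d x y r r i + y * G d x y r (r+2) i
              else G d x y r (j:ℕ) i)
          = det (Matrix.of fun i (j : Fin n) => G d x y r (j:ℕ) i) :=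
        det_colop (G d x y r) hr hr2 (by omega) y
      have step2 :
          det (Matrix.of fun i (j : Fin n) => G d x y r (j:ℕ) i)
          = det (Matrix.of fun i (j : Fin n) =>
              if (j:ℕ) = r then
                (if r < r then d r i - x * d (r+1) i + y * d (r+2) i else d r i)
                + (-x) * (if r+1 < r then d (r+1) i - x * d (r+2) i + y * d (r+3) i
                    else d (r+1) i)
              else if (j:ℕ) < r then d (j:ℕ) i - x * d ((j:ℕ)+1) i + y * d ((j:ℕ)+2) i
                else d (j:ℕ) i) :=
        det_congr_val (G d x y r)
          (fun m i => if m = r then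
                (if r < r then d r i - x * d (r+1) i + y * d (r+2) i else d r i)
                + (-x) * (if r+1 < r then d (r+1) i - x * d (r+2) i + y * d (r+3) i
                    else d (r+1) i)
              else if m < r then d m i - x * d (m+1) i + y * d (m+2) i else d m i)
          (by
            intro m hm i
            show G d x y r m i = _
            unfold G
            split_ifs <;> first | ring1 | (subst_vars; ring1) | (exfalso; omega)
            )
      have step2b :
          det (Matrix.of fun i (j : Fin n) =>
              if (j:ℕ) = r then
                (if r < r then d r i - x * d (r+1) i + y * d (r+2) i else d r i)
                + (-x) * (if r+1 < r then d (r+1) i - x * d (r+2) i + y * d (r+3) i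
                    else d (r+1) i)
              else if (j:ℕ) < r then d (j:ℕ) i - x * d ((j:ℕ)+1) i + y * d ((j:ℕ)+2) i
                else d (j:ℕ) i)
          = det (Matrix.of fun i (j : Fin n) =>
              if (j:ℕ) < r then d (j:ℕ) i - x * d ((j:ℕ)+1) i + y * d ((j:ℕ)+2) i
              else d (j:ℕ) i) :=
        det_colop
          (fun m i => if m < r then d m i - x * d (m+1) i + y * d (m+2) i else d m i)
          hr hr1 (by omega) (-x)
      rw [step1, step1b, step2, step2b]
      exact ops2 d x y r hr1

lemma L1 (y : Fin (n+1) → Fin n → ℂ) (k : Fin n) :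
    ∑ j : Fin (n+1), (-1:ℂ)^(j:ℕ) * y j k
        * det (Matrix.of fun i (m : Fin n) => y (j.succAbove m) i) = 0 := by
  classical
  set C : Matrix (Fin (n+1)) (Fin (n+1)) ℂ :=
    Matrix.of (fun i' j => if h : (i':ℕ) < n then y j ⟨i', h⟩ else y j k) with hC
  have hdet : C.det = 0 := by
    apply det_zero_of_row_eq (i := Fin.castSucc k) (j := Fin.last n)
    · exact Fin.ne_of_lt (Fin.castSucc_lt_last k)
    · funext j
      have hk : ((Fin.castSucc k : Fin (n+1)) : ℕ) < n := by
        simpa using k.isLt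
      simp only [hC, Matrix.of_apply, dif_pos hk, Fin.val_last, dif_neg (lt_irrefl n)]
      have hkk : (⟨((Fin.castSucc k : Fin (n+1)) : ℕ), hk⟩ : Fin n) = k := Fin.ext (by simp)
      rw [hkk]
  have hexp := det_succ_row C (Fin.last n)
  rw [hdet] at hexp
  have hterm : ∀ j : Fin (n+1),
      (-1:ℂ) ^ ((Fin.last n : ℕ) + (j:ℕ)) * C (Fin.last n) j
          * det (C.submatrix (Fin.last n).succAbove j.succAbove)
      = (-1:ℂ)^(n:ℕ) * ((-1:ℂ)^(j:ℕ) * y j k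
          * det (Matrix.of fun i (m : Fin n) => y (j.succAbove m) i)) := by
    intro j
    have h1 : C (Fin.last n) j = y j k := by
      simp [hC, lt_irrefl n]
    have h2 : C.submatrix (Fin.last n).succAbove j.succAbove
        = Matrix.of fun i (m : Fin n) => y (j.succAbove m) i := by
      ext i m
      have hi : (((Fin.last n).succAbove i : Fin (n+1)) : ℕ) < n := by
        rw [Fin.succAbove_last]
        simpa using i.isLt
      have hv : (((Fin.last n).succAbove i : Fin (n+1)) : ℕ) = (i:ℕ) := by
        rw [Fin.succAbove_last]; simp
      simp only [Matrix.submatrix_apply, hC, Matrix.of_apply, dif_pos hi]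
      congr 1
      exact Fin.ext hv
    rw [h1, h2, Fin.val_last, pow_add]
    ring
  rw [Finset.sum_congr rfl (fun j _ => hterm j), ← Finset.mul_sum] at hexp
  have hne : ((-1:ℂ)^(n:ℕ)) ≠ 0 := by
    apply pow_ne_zero; norm_num
  have := (mul_eq_zero.mp hexp.symm).resolve_left hne
  exact this

lemma det_update_sum (M : Matrix (Fin n) (Fin n) ℂ) (col : Fin n)
    (e : Fin (n+1) → ℂ) (y : Fin (n+1) → Fin n → ℂ) :
    det (M.updateCol col (fun k => ∑ j : Fin (n+1), e j * y j k))
      = ∑ j : Fin (n+1), e j * det (M.updateCol col (y j)) := by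
  classical
  have main : ∀ s : Finset (Fin (n+1)),
      det (M.updateCol col (fun k => ∑ j ∈ s, e j * y j k))
        = ∑ j ∈ s, e j * det (M.updateCol col (y j)) := by
    intro s
    induction s using Finset.induction_on with
    | empty =>
        simp only [Finset.sum_empty]
        apply det_eq_zero_of_column_eq_zero col
        intro i
        simp [Matrix.updateCol_self]
    | @insert a s ha ih =>
        have hsplit : (fun k => ∑ j ∈ insert a s, e j * y j k)
            = (e a • y a) + (fun k => ∑ j ∈ s, e j * y j k) := by
          funext k
          simp [Finset.sum_insert ha]
        rw [hsplit, det_updateCol_add, det_updateCol_smul,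
          Finset.sum_insert ha, ih]
        try simp [smul_eq_mul]
  exact main Finset.univ

lemma contraction (M : Matrix (Fin n) (Fin n) ℂ) (col : Fin n)
    (y : Fin (n+1) → Fin n → ℂ) :
    ∑ j : Fin (n+1), (-1:ℂ)^(j:ℕ)
        * det (Matrix.of fun i (m : Fin n) => y (j.succAbove m) i)
        * det (M.updateCol col (y j)) = 0 := by
  classical
  set e : Fin (n+1) → ℂ := fun j =>
    (-1:ℂ)^(j:ℕ) * det (Matrix.of fun i (m : Fin n) => y (j.succAbove m) i) with he
  have hzero : (fun k => ∑ j : Fin (n+1), e j * y j k) = fun _ => 0 := by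
    funext k
    have := L1 y k
    rw [← this]
    apply Finset.sum_congr rfl
    intro j _
    simp only [he]
    ring
  have h1 : det (M.updateCol col (fun k => ∑ j : Fin (n+1), e j * y j k)) = 0 := by
    rw [hzero]
    apply det_eq_zero_of_column_eq_zero col
    intro i
    simp [Matrix.updateCol_self]
  rw [det_update_sum] at h1
  rw [← h1]

set_option maxHeartbeats 3000000 in
lemma main (K : ℕ) (a b : ℂ) (c u v w : ℕ → Fin (K+2) → ℂ)
    (hu : ∀ m i, u m i = c m i - b * c (m+1) i)
    (hv : ∀ m i, v m i = c m i - a * c (m+1) i)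
    (hw : ∀ m i, w m i = c m i - (a+b) * c (m+1) i + a*b*c (m+2) i) :
    b * det (Matrix.of fun i (j : Fin (K+2)) => u (j:ℕ) i)
      * det (Matrix.of fun i (j : Fin (K+2)) => v ((j:ℕ)+1) i)
    - a * det (Matrix.of fun i (j : Fin (K+2)) => v (j:ℕ) i)
      * det (Matrix.of fun i (j : Fin (K+2)) => u ((j:ℕ)+1) i)
    = (b - a) * det (Matrix.of fun i (j : Fin (K+2)) => w (j:ℕ) i)
      * det (Matrix.of fun i (j : Fin (K+2)) => c ((j:ℕ)+1) i) := by
  classical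
  -- abbreviations
  set A := det (Matrix.of fun i (j : Fin (K+2)) => v (j:ℕ) i) with hA
  set B := det (Matrix.of fun i (j : Fin (K+2)) => u (j:ℕ) i) with hB
  set V' := det (Matrix.of fun i (j : Fin (K+2)) => v ((j:ℕ)+1) i) with hV'
  set U' := det (Matrix.of fun i (j : Fin (K+2)) => u ((j:ℕ)+1) i) with hU'
  set W := det (Matrix.of fun i (j : Fin (K+2)) => w (j:ℕ) i) with hW
  set T' := det (Matrix.of fun i (j : Fin (K+2)) => c ((j:ℕ)+1) i) with hT'
  set colTop : Fin (K+2) := ⟨K+1, by omega⟩ with hcolTop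
  set Y : Fin (K+3) → Fin (K+2) → ℂ := fun j =>
    if (j:ℕ) = K+1 then u (K+1) else if (j:ℕ) = K+2 then v (K+1) else w (j:ℕ) with hY
  have hYval : ∀ X : Fin (K+3), Y X
      = if (X:ℕ) = K+1 then u (K+1) else if (X:ℕ) = K+2 then v (K+1) else w (X:ℕ) := by
    intro X; rw [hY]
  set M0 : Matrix (Fin (K+2)) (Fin (K+2)) ℂ :=
    Matrix.of fun i (j : Fin (K+2)) => if (j:ℕ) = K+1 then (0:ℂ) else w ((j:ℕ)+1) i with hM0
  have hupdate : ∀ z : Fin (K+2) → ℂ, M0.updateCol colTop z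
      = Matrix.of fun i (j : Fin (K+2)) =>
          if (j:ℕ) = K+1 then z i else w ((j:ℕ)+1) i := by
    intro z
    have h := updateCol_of_val
      (fun m i => if m = K+1 then (0:ℂ) else w (m+1) i) (K+1) (by omega) z
    rw [hM0, hcolTop]
    rw [show (⟨K+1, by omega⟩ : Fin (K+2)) = ⟨K+1, by omega⟩ from rfl]
    rw [h]
    ext i j
    by_cases hj : (j:ℕ) = K+1
    · simp [hj]
    · simp [hj]
  -- the contraction identity
  have hcontr := contraction (n := K+2) M0 colTop Y
  -- value facts for the "detX" determinants
  have FG : det (Matrix.of fun i (j : Fin (K+2)) =>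
        if (j:ℕ) = K+1 then w 0 i else w ((j:ℕ)+1) i)
      = (-1:ℂ)^(K+1) * W := by
    have heq : (Matrix.of fun i (j : Fin (K+2)) =>
          if (j:ℕ) = K+1 then w 0 i else w ((j:ℕ)+1) i)
        = (Matrix.of fun i (j : Fin (K+2)) => w (j:ℕ) i).submatrix id (finRotate (K+2)) := by
      ext i j
      have h1 : finRotate (K+2) j = j + 1 := finRotate_succ_apply j
      have h2 : ((j + 1 : Fin (K+2)) : ℕ) = if j = Fin.last (K+1) then 0 else (j:ℕ)+1 :=
        Fin.val_add_one j
      simp only [Matrix.submatrix_apply, Matrix.of_apply, id_eq, h1, h2]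
      by_cases hj : (j:ℕ) = K+1
      · have : j = Fin.last (K+1) := Fin.ext (by simpa using hj)
        simp [hj, this]
      · have : j ≠ Fin.last (K+1) := by
          intro hcon; apply hj; rw [hcon]; rfl
        simp [hj, this]
    rw [heq, det_permute', sign_finRotate]
    rw [hW]
    push_cast
    ring
  have FU' : det (Matrix.of fun i (j : Fin (K+2)) =>
        if (j:ℕ) < K then w ((j:ℕ)+1) i else u ((j:ℕ)+1) i) = U' := by
    have h1 : det (Matrix.of fun i (j : Fin (K+2)) =>
          if (j:ℕ) < K then w ((j:ℕ)+1) i else u ((j:ℕ)+1) i)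
        = det (Matrix.of fun i (j : Fin (K+2)) =>
            if (j:ℕ) < K then u ((j:ℕ)+1) i - a * u ((j:ℕ)+1+1) i else u ((j:ℕ)+1) i) :=
      det_congr_val
        (fun m i => if m < K then w (m+1) i else u (m+1) i)
        (fun m i => if m < K then u (m+1) i - a * u (m+1+1) i else u (m+1) i)
        (by
          intro m hm i
          split_ifs <;> (try subst_vars) <;> (try simp only [hu, hv, hw])
            <;> first | rfl | ring1 | (exfalso; omega))
    rw [h1, ops1 (fun m => u (m+1)) a K (by omega), hU']
  have FV' : det (Matrix.of fun i (j : Fin (K+2)) =>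
        if (j:ℕ) < K then w ((j:ℕ)+1) i else v ((j:ℕ)+1) i) = V' := by
    have h1 : det (Matrix.of fun i (j : Fin (K+2)) =>
          if (j:ℕ) < K then w ((j:ℕ)+1) i else v ((j:ℕ)+1) i)
        = det (Matrix.of fun i (j : Fin (K+2)) =>
            if (j:ℕ) < K then v ((j:ℕ)+1) i - b * v ((j:ℕ)+1+1) i else v ((j:ℕ)+1) i) :=
      det_congr_val
        (fun m i => if m < K then w (m+1) i else v (m+1) i)
        (fun m i => if m < K then v (m+1) i - b * v (m+1+1) i else v (m+1) i)
        (by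
          intro m hm i
          split_ifs <;> (try subst_vars) <;> (try simp only [hu, hv, hw])
            <;> first | rfl | ring1 | (exfalso; omega))
    rw [h1, ops1 (fun m => v (m+1)) b K (by omega), hV']
  have FA : det (Matrix.of fun i (j : Fin (K+2)) =>
        if (j:ℕ) < K+1 then w (j:ℕ) i else v (j:ℕ) i) = A := by
    have h1 : det (Matrix.of fun i (j : Fin (K+2)) =>
          if (j:ℕ) < K+1 then w (j:ℕ) i else v (j:ℕ) i)
        = det (Matrix.of fun i (j : Fin (K+2)) =>
            if (j:ℕ) < K+1 then v (j:ℕ) i - b * v ((j:ℕ)+1) i else v (j:ℕ) i) :=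
      det_congr_val
        (fun m i => if m < K+1 then w m i else v m i)
        (fun m i => if m < K+1 then v m i - b * v (m+1) i else v m i)
        (by
          intro m hm i
          split_ifs <;> (try subst_vars) <;> (try simp only [hu, hv, hw])
            <;> first | rfl | ring1 | (exfalso; omega))
    rw [h1, ops1 v b (K+1) (by omega), hA]
  have FB : det (Matrix.of fun i (j : Fin (K+2)) =>
        if (j:ℕ) < K+1 then w (j:ℕ) i else u (j:ℕ) i) = B := by
    have h1 : det (Matrix.of fun i (j : Fin (K+2)) =>
          if (j:ℕ) < K+1 then w (j:ℕ) i else u (j:ℕ) i)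
        = det (Matrix.of fun i (j : Fin (K+2)) =>
            if (j:ℕ) < K+1 then u (j:ℕ) i - a * u ((j:ℕ)+1) i else u (j:ℕ) i) :=
      det_congr_val
        (fun m i => if m < K+1 then w m i else u m i)
        (fun m i => if m < K+1 then u m i - a * u (m+1) i else u m i)
        (by
          intro m hm i
          split_ifs <;> (try subst_vars) <;> (try simp only [hu, hv, hw])
            <;> first | rfl | ring1 | (exfalso; omega))
    rw [h1, ops1 u a (K+1) (by omega), hB]
  have FT' : det (Matrix.of fun i (j : Fin (K+2)) =>
        if (j:ℕ) < K then w ((j:ℕ)+1) i else if (j:ℕ) = K then u (K+1) i else c ((j:ℕ)+1) i)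
      = T' := by
    have h1 : det (Matrix.of fun i (j : Fin (K+2)) =>
          if (j:ℕ) < K then w ((j:ℕ)+1) i else if (j:ℕ) = K then u (K+1) i
          else c ((j:ℕ)+1) i)
        = det (Matrix.of fun i (j : Fin (K+2)) =>
            if (j:ℕ) = K then
              (if (K:ℕ) < K then w (K+1) i else c (K+1) i)
              + (-b) * (if K+1 < K then w (K+1+1) i else c (K+1+1) i)
            else if (j:ℕ) < K then w ((j:ℕ)+1) i else c ((j:ℕ)+1) i) :=
      det_congr_val
        (fun m i => if m < K then w (m+1) i else if m = K then u (K+1) i else c (m+1) i)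
        (fun m i => if m = K then
              (if (K:ℕ) < K then w (K+1) i else c (K+1) i)
              + (-b) * (if K+1 < K then w (K+1+1) i else c (K+1+1) i)
            else if m < K then w (m+1) i else c (m+1) i)
        (by
          intro m hm i
          split_ifs <;> (try subst_vars) <;> (try simp only [hu, hv, hw])
            <;> first | rfl | ring1 | (exfalso; omega))
    have h2 := det_colop (n := K+2)
      (fun m i => if m < K then w (m+1) i else c (m+1) i)
      (r := K) (r' := K+1) (by omega) (by omega) (by omega) (-b)
    have h3 : det (Matrix.of fun i (j : Fin (K+2)) =>
          if (j:ℕ) < K then w ((j:ℕ)+1) i else c ((j:ℕ)+1) i)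
        = det (Matrix.of fun i (j : Fin (K+2)) =>
            if (j:ℕ) < K then c ((j:ℕ)+1) i - (a+b) * c ((j:ℕ)+1+1) i + a*b* c ((j:ℕ)+1+2) i
            else c ((j:ℕ)+1) i) :=
      det_congr_val
        (fun m i => if m < K then w (m+1) i else c (m+1) i)
        (fun m i => if m < K then c (m+1) i - (a+b) * c (m+1+1) i + a*b*c (m+1+2) i
            else c (m+1) i)
        (by
          intro m hm i
          split_ifs <;> (try subst_vars) <;> (try simp only [hu, hv, hw])
            <;> first | rfl | ring1 | (exfalso; omega))
    rw [h1, h2, h3, ops2 (fun m => c (m+1)) (a+b) (a*b) K (by omega), hT']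
  have FDXu : det (Matrix.of fun i (j : Fin (K+2)) =>
        if (j:ℕ) = K+1 then u (K+1) i else w ((j:ℕ)+1) i) = a * U' := by
    have h1 : det (Matrix.of fun i (j : Fin (K+2)) =>
          if (j:ℕ) = K+1 then u (K+1) i else w ((j:ℕ)+1) i)
        = det (Matrix.of fun i (j : Fin (K+2)) =>
            if (j:ℕ) = K then
              (if (K:ℕ) = K then (-a) * u (K+2) i
                else (if (K:ℕ) = K+1 then u (K+1) i else w (K+1) i))
              + (1:ℂ) * (if K+1 = K then (-a) * u (K+2) i
                else (if K+1 = K+1 then u (K+1) i else w (K+1+1) i))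
            else if (j:ℕ) = K then (-a) * u (K+2) i
              else (if (j:ℕ) = K+1 then u (K+1) i else w ((j:ℕ)+1) i)) :=
      det_congr_val
        (fun m i => if m = K+1 then u (K+1) i else w (m+1) i)
        (fun m i => if m = K then
              (if (K:ℕ) = K then (-a) * u (K+2) i
                else (if (K:ℕ) = K+1 then u (K+1) i else w (K+1) i))
              + (1:ℂ) * (if K+1 = K then (-a) * u (K+2) i
                else (if K+1 = K+1 then u (K+1) i else w (K+1+1) i))
            else if m = K then (-a) * u (K+2) i
              else (if m = K+1 then u (K+1) i else w (m+1) i))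
        (by
          intro m hm i
          split_ifs <;> (try subst_vars) <;> (try simp only [hu, hv, hw])
            <;> first | rfl | ring1 | (exfalso; omega))
    have h2 := det_colop (n := K+2)
      (fun m i => if m = K then (-a) * u (K+2) i
          else (if m = K+1 then u (K+1) i else w (m+1) i))
      (r := K) (r' := K+1) (by omega) (by omega) (by omega) (1:ℂ)
    have h3 := det_colscale (n := K+2)
      (fun m i => if m = K+1 then u (K+1) i else w (m+1) i)
      (r := K) (by omega) (-a) (u (K+2))
    have h4 : det (Matrix.of fun i (j : Fin (K+2)) =>
          if (j:ℕ) = K then u (K+2) i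
            else (if (j:ℕ) = K+1 then u (K+1) i else w ((j:ℕ)+1) i))
        = det (Matrix.of fun i (j : Fin (K+2)) =>
            (fun m i => if m < K then w (m+1) i else u (m+1) i)
              (if (j:ℕ) = K then K+1 else if (j:ℕ) = K+1 then K else (j:ℕ)) i) :=
      det_congr_val
        (fun m i => if m = K then u (K+2) i
            else (if m = K+1 then u (K+1) i else w (m+1) i))
        (fun m i => (fun m' i => if m' < K then w (m'+1) i else u (m'+1) i)
            (if m = K then K+1 else if m = K+1 then K else m) i)
        (by
          intro m hm i
          dsimp only
          split_ifs <;> (try subst_vars) <;> (try simp only [hu, hv, hw])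
            <;> first | rfl | ring1 | (exfalso; omega))
    have h5 := det_colswap (n := K+2)
      (fun m i => if m < K then w (m+1) i else u (m+1) i)
      (r := K) (r' := K+1) (by omega) (by omega) (by omega)
    rw [h1, h2, h3, h4, h5, FU']
    ring
  have FDXv : det (Matrix.of fun i (j : Fin (K+2)) =>
        if (j:ℕ) = K+1 then v (K+1) i else w ((j:ℕ)+1) i) = b * V' := by
    have h1 : det (Matrix.of fun i (j : Fin (K+2)) =>
          if (j:ℕ) = K+1 then v (K+1) i else w ((j:ℕ)+1) i)
        = det (Matrix.of fun i (j : Fin (K+2)) =>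
            if (j:ℕ) = K then
              (if (K:ℕ) = K then (-b) * v (K+2) i
                else (if (K:ℕ) = K+1 then v (K+1) i else w (K+1) i))
              + (1:ℂ) * (if K+1 = K then (-b) * v (K+2) i
                else (if K+1 = K+1 then v (K+1) i else w (K+1+1) i))
            else if (j:ℕ) = K then (-b) * v (K+2) i
              else (if (j:ℕ) = K+1 then v (K+1) i else w ((j:ℕ)+1) i)) :=
      det_congr_val
        (fun m i => if m = K+1 then v (K+1) i else w (m+1) i)
        (fun m i => if m = K then
              (if (K:ℕ) = K then (-b) * v (K+2) i
                else (if (K:ℕ) = K+1 then v (K+1) i else w (K+1) i))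
              + (1:ℂ) * (if K+1 = K then (-b) * v (K+2) i
                else (if K+1 = K+1 then v (K+1) i else w (K+1+1) i))
            else if m = K then (-b) * v (K+2) i
              else (if m = K+1 then v (K+1) i else w (m+1) i))
        (by
          intro m hm i
          split_ifs <;> (try subst_vars) <;> (try simp only [hu, hv, hw])
            <;> first | rfl | ring1 | (exfalso; omega))
    have h2 := det_colop (n := K+2)
      (fun m i => if m = K then (-b) * v (K+2) i
          else (if m = K+1 then v (K+1) i else w (m+1) i))
      (r := K) (r' := K+1) (by omega) (by omega) (by omega) (1:ℂ)
    have h3 := det_colscale (n := K+2)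
      (fun m i => if m = K+1 then v (K+1) i else w (m+1) i)
      (r := K) (by omega) (-b) (v (K+2))
    have h4 : det (Matrix.of fun i (j : Fin (K+2)) =>
          if (j:ℕ) = K then v (K+2) i
            else (if (j:ℕ) = K+1 then v (K+1) i else w ((j:ℕ)+1) i))
        = det (Matrix.of fun i (j : Fin (K+2)) =>
            (fun m i => if m < K then w (m+1) i else v (m+1) i)
              (if (j:ℕ) = K then K+1 else if (j:ℕ) = K+1 then K else (j:ℕ)) i) :=
      det_congr_val
        (fun m i => if m = K then v (K+2) i
            else (if m = K+1 then v (K+1) i else w (m+1) i))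
        (fun m i => (fun m' i => if m' < K then w (m'+1) i else v (m'+1) i)
            (if m = K then K+1 else if m = K+1 then K else m) i)
        (by
          intro m hm i
          dsimp only
          split_ifs <;> (try subst_vars) <;> (try simp only [hu, hv, hw])
            <;> first | rfl | ring1 | (exfalso; omega))
    have h5 := det_colswap (n := K+2)
      (fun m i => if m < K then w (m+1) i else v (m+1) i)
      (r := K) (r' := K+1) (by omega) (by omega) (by omega)
    rw [h1, h2, h3, h4, h5, FV']
    ring
  -- function-level values of Y
  have hYval2 : ∀ (X : Fin (K+3)) (i : Fin (K+2)), Y X i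
      = if (X:ℕ) = K+1 then u (K+1) i else if (X:ℕ) = K+2 then v (K+1) i
        else w (X:ℕ) i := by
    intro X i
    rw [hYval]
    split_ifs <;> rfl
  have hY0 : Y 0 = w 0 := by
    rw [hYval]
    simp only [Fin.val_zero]
    exact (if_neg (by omega)).trans (if_neg (by omega))
  have hYK1 : Y ⟨K+1, by omega⟩ = u (K+1) := by
    rw [hYval]
    rw [show ((⟨K+1, by omega⟩ : Fin (K+3)) : ℕ) = K+1 from rfl, if_pos rfl]
  have hYK2 : Y ⟨K+2, by omega⟩ = v (K+1) := by
    rw [hYval]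
    rw [show ((⟨K+2, by omega⟩ : Fin (K+3)) : ℕ) = K+2 from rfl,
      if_neg (by omega), if_pos rfl]
  -- the three omitted-column determinants
  have OD0 : det (Matrix.of fun i (m : Fin (K+2)) => Y ((0 : Fin (K+3)).succAbove m) i)
      = (b-a) * T' := by
    have e0 : (Matrix.of fun i (m : Fin (K+2)) => Y ((0 : Fin (K+3)).succAbove m) i)
        = Matrix.of fun i (m : Fin (K+2)) =>
            if (m:ℕ) = K then u (K+1) i
            else (if (m:ℕ) = K+1 then v (K+1) i else w ((m:ℕ)+1) i) := by
      ext i m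
      have hsv : (((0 : Fin (K+3)).succAbove m : Fin (K+3)) : ℕ) = (m:ℕ)+1 := by
        rw [succAbove_val]
        simp
      dsimp only [Matrix.of_apply]
      rw [hYval2, hsv]
      have hmlt : (m:ℕ) < K+2 := m.isLt
      by_cases h1 : (m:ℕ) = K
      · rw [if_pos (by omega), if_pos h1]
      · by_cases h2 : (m:ℕ) = K+1
        · rw [if_neg (by omega), if_pos (by omega), if_neg h1, if_pos h2]
        · rw [if_neg (by omega), if_neg (by omega), if_neg h1, if_neg h2]
    have s1 : det (Matrix.of fun i (m : Fin (K+2)) =>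
          if (m:ℕ) = K then u (K+1) i
          else (if (m:ℕ) = K+1 then v (K+1) i else w ((m:ℕ)+1) i))
        = det (Matrix.of fun i (j : Fin (K+2)) =>
            if (j:ℕ) = K+1 then
              (if K+1 = K+1 then (b-a) * c (K+2) i
                else (if K+1 = K then u (K+1) i
                  else (if K+1 = K+1 then v (K+1) i else w (K+1+1) i)))
              + (1:ℂ) * (if K = K+1 then (b-a) * c (K+2) i
                else (if K = K then u (K+1) i
                  else (if K = K+1 then v (K+1) i else w (K+1) i)))
            else (if (j:ℕ) = K+1 then (b-a) * c (K+2) i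
              else (if (j:ℕ) = K then u (K+1) i
                else (if (j:ℕ) = K+1 then v (K+1) i else w ((j:ℕ)+1) i)))) :=
      det_congr_val
        (fun m i => if m = K then u (K+1) i
          else (if m = K+1 then v (K+1) i else w (m+1) i))
        (fun m i => if m = K+1 then
              (if K+1 = K+1 then (b-a) * c (K+2) i
                else (if K+1 = K then u (K+1) i
                  else (if K+1 = K+1 then v (K+1) i else w (K+1+1) i)))
              + (1:ℂ) * (if K = K+1 then (b-a) * c (K+2) i
                else (if K = K then u (K+1) i
                  else (if K = K+1 then v (K+1) i else w (K+1) i)))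
            else (if m = K+1 then (b-a) * c (K+2) i
              else (if m = K then u (K+1) i
                else (if m = K+1 then v (K+1) i else w (m+1) i))))
        (by
          intro m hm i
          split_ifs <;> (try subst_vars) <;> (try simp only [hu, hv, hw])
            <;> first | rfl | ring1 | (exfalso; omega))
    have s2 := det_colop (n := K+2)
      (fun m i => if m = K+1 then (b-a) * c (K+2) i
        else (if m = K then u (K+1) i
          else (if m = K+1 then v (K+1) i else w (m+1) i)))
      (r := K+1) (r' := K) (by omega) (by omega) (by omega) (1:ℂ)
    have s3 := det_colscale (n := K+2)
      (fun m i => if m = K then u (K+1) i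
        else (if m = K+1 then v (K+1) i else w (m+1) i))
      (r := K+1) (by omega) (b-a) (c (K+2))
    have s4 : det (Matrix.of fun i (j : Fin (K+2)) =>
          if (j:ℕ) = K+1 then c (K+2) i
          else (if (j:ℕ) = K then u (K+1) i
            else (if (j:ℕ) = K+1 then v (K+1) i else w ((j:ℕ)+1) i)))
        = det (Matrix.of fun i (j : Fin (K+2)) =>
            if (j:ℕ) < K then w ((j:ℕ)+1) i
            else if (j:ℕ) = K then u (K+1) i else c ((j:ℕ)+1) i) :=
      det_congr_val
        (fun m i => if m = K+1 then c (K+2) i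
          else (if m = K then u (K+1) i
            else (if m = K+1 then v (K+1) i else w (m+1) i)))
        (fun m i => if m < K then w (m+1) i
          else if m = K then u (K+1) i else c (m+1) i)
        (by
          intro m hm i
          split_ifs <;> (try subst_vars) <;> (try simp only [hu, hv, hw])
            <;> first | rfl | ring1 | (exfalso; omega))
    rw [e0, s1, s2, s3, s4, FT']
  have ODK1 : det (Matrix.of fun i (m : Fin (K+2)) =>
        Y ((⟨K+1, by omega⟩ : Fin (K+3)).succAbove m) i) = A := by
    have e1 : (Matrix.of fun i (m : Fin (K+2)) =>
          Y ((⟨K+1, by omega⟩ : Fin (K+3)).succAbove m) i)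
        = Matrix.of fun i (m : Fin (K+2)) =>
            if (m:ℕ) < K+1 then w (m:ℕ) i else v (m:ℕ) i := by
      ext i m
      have hsv : (((⟨K+1, by omega⟩ : Fin (K+3)).succAbove m : Fin (K+3)) : ℕ)
          = if (m:ℕ) < K+1 then (m:ℕ) else (m:ℕ)+1 := by
        rw [succAbove_val]
      dsimp only [Matrix.of_apply]
      rw [hYval2, hsv]
      have hmlt : (m:ℕ) < K+2 := m.isLt
      by_cases h1 : (m:ℕ) < K+1
      · rw [if_pos h1, if_neg (by omega), if_neg (by omega), if_pos h1]
      · have hm1 : (m:ℕ) = K+1 := by omega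
        rw [if_neg h1, if_neg (by omega), if_pos (by omega), if_neg h1, hm1]
    rw [e1, FA]
  have ODK2 : det (Matrix.of fun i (m : Fin (K+2)) =>
        Y ((⟨K+2, by omega⟩ : Fin (K+3)).succAbove m) i) = B := by
    have e2 : (Matrix.of fun i (m : Fin (K+2)) =>
          Y ((⟨K+2, by omega⟩ : Fin (K+3)).succAbove m) i)
        = Matrix.of fun i (m : Fin (K+2)) =>
            if (m:ℕ) < K+1 then w (m:ℕ) i else u (m:ℕ) i := by
      ext i m
      have hsv : (((⟨K+2, by omega⟩ : Fin (K+3)).succAbove m : Fin (K+3)) : ℕ)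
          = if (m:ℕ) < K+2 then (m:ℕ) else (m:ℕ)+1 := by
        rw [succAbove_val]
      dsimp only [Matrix.of_apply]
      have hmlt : (m:ℕ) < K+2 := m.isLt
      rw [hYval2, hsv, if_pos hmlt]
      by_cases h1 : (m:ℕ) < K+1
      · rw [if_neg (by omega), if_neg (by omega), if_pos h1]
      · have hm1 : (m:ℕ) = K+1 := by omega
        rw [if_pos hm1, if_neg h1, hm1]
    rw [e2, FB]
  -- vanishing of the middle terms
  have hmid : ∀ j : Fin (K+3), (j:ℕ) ≠ 0 → (j:ℕ) ≠ K+1 → (j:ℕ) ≠ K+2 →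
      det (M0.updateCol colTop (Y j)) = 0 := by
    intro j h0 h1 h2
    have hjlt : (j:ℕ) < K+3 := j.isLt
    have hYj : Y j = w (j:ℕ) := by
      rw [hYval, if_neg h1, if_neg h2]
    rw [hYj, hupdate]
    obtain ⟨s, hs⟩ : ∃ s, (j:ℕ) = s + 1 := ⟨(j:ℕ)-1, by omega⟩
    apply det_zero_of_column_eq (i := (⟨s, by omega⟩ : Fin (K+2)))
      (j := (⟨K+1, by omega⟩ : Fin (K+2)))
    · apply Fin.ne_of_val_ne
      exact (by omega : s ≠ K+1)
    · intro k
      show (if s = K+1 then w ((j:ℕ)) k else w (s+1) k)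
        = (if K+1 = K+1 then w ((j:ℕ)) k else w (K+1+1) k)
      rw [if_neg (by omega : ¬ (s = K+1)), if_pos rfl, hs]
  -- summing the contraction identity
  have hvanish : ∀ j ∈ (Finset.univ : Finset (Fin (K+3))),
      j ∉ ({(0 : Fin (K+3)), ⟨K+1, by omega⟩, ⟨K+2, by omega⟩} : Finset (Fin (K+3))) →
      (-1:ℂ)^(j:ℕ) * det (Matrix.of fun i (m : Fin (K+2)) => Y (j.succAbove m) i)
        * det (M0.updateCol colTop (Y j)) = 0 := by
    intro j _ hj
    simp only [Finset.mem_insert, Finset.mem_singleton] at hj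
    push_neg at hj
    obtain ⟨hj0, hj1, hj2⟩ := hj
    have h0 : (j:ℕ) ≠ 0 := by
      intro h; exact hj0 (Fin.ext (by simp [h]))
    have h1 : (j:ℕ) ≠ K+1 := by
      intro h; exact hj1 (Fin.ext (by simp [h]))
    have h2 : (j:ℕ) ≠ K+2 := by
      intro h; exact hj2 (Fin.ext (by simp [h]))
    rw [hmid j h0 h1 h2, mul_zero]
  have hne0 : (0 : Fin (K+3)) ∉
      ({⟨K+1, by omega⟩, ⟨K+2, by omega⟩} : Finset (Fin (K+3))) := by
    simp only [Finset.mem_insert, Finset.mem_singleton, Fin.ext_iff, Fin.val_zero]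
    omega
  have hne1 : (⟨K+1, by omega⟩ : Fin (K+3)) ∉
      ({⟨K+2, by omega⟩} : Finset (Fin (K+3))) := by
    simp only [Finset.mem_singleton, Fin.ext_iff]
    omega
  have hzero : (0:ℂ) =
      ((b-a) * T') * ((-1:ℂ)^(K+1) * W)
      + ((-1:ℂ)^(K+1) * A * (a * U')
        + (-((-1:ℂ)^(K+1))) * B * (b * V')) := by
    calc (0:ℂ) = ∑ j : Fin (K+3), (-1:ℂ)^(j:ℕ)
          * det (Matrix.of fun i (m : Fin (K+2)) => Y (j.succAbove m) i)
          * det (M0.updateCol colTop (Y j)) := hcontr.symm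
      _ = ∑ j ∈ ({(0 : Fin (K+3)), ⟨K+1, by omega⟩, ⟨K+2, by omega⟩} :
            Finset (Fin (K+3))), (-1:ℂ)^(j:ℕ)
          * det (Matrix.of fun i (m : Fin (K+2)) => Y (j.succAbove m) i)
          * det (M0.updateCol colTop (Y j)) :=
        (Finset.sum_subset (Finset.subset_univ _) hvanish).symm
      _ = (-1:ℂ)^((0 : Fin (K+3)):ℕ)
            * det (Matrix.of fun i (m : Fin (K+2)) => Y ((0 : Fin (K+3)).succAbove m) i)
            * det (M0.updateCol colTop (Y 0))
          + ((-1:ℂ)^(((⟨K+1, by omega⟩ : Fin (K+3))):ℕ)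
            * det (Matrix.of fun i (m : Fin (K+2)) =>
                Y ((⟨K+1, by omega⟩ : Fin (K+3)).succAbove m) i)
            * det (M0.updateCol colTop (Y ⟨K+1, by omega⟩))
          + (-1:ℂ)^(((⟨K+2, by omega⟩ : Fin (K+3))):ℕ)
            * det (Matrix.of fun i (m : Fin (K+2)) =>
                Y ((⟨K+2, by omega⟩ : Fin (K+3)).succAbove m) i)
            * det (M0.updateCol colTop (Y ⟨K+2, by omega⟩))) := by
        rw [Finset.sum_insert hne0, Finset.sum_insert hne1, Finset.sum_singleton]
      _ = ((b-a) * T') * ((-1:ℂ)^(K+1) * W)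
          + ((-1:ℂ)^(K+1) * A * (a * U')
            + (-((-1:ℂ)^(K+1))) * B * (b * V')) := by
        rw [OD0, ODK1, ODK2]
        rw [hY0, hYK1, hYK2, hupdate (w 0), hupdate (u (K+1)), hupdate (v (K+1))]
        rw [FG, FDXu, FDXv]
        rw [show ((0 : Fin (K+3)):ℕ) = 0 from Fin.val_zero _,
          show (((⟨K+1, by omega⟩ : Fin (K+3))):ℕ) = K+1 from rfl,
          show (((⟨K+2, by omega⟩ : Fin (K+3))):ℕ) = K+2 from rfl]
        rw [show K+2 = (K+1)+1 from rfl, pow_succ]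
        ring
  have hss : (-1:ℂ)^(K+1) * (-1:ℂ)^(K+1) = 1 := by
    rw [← pow_add]
    exact Even.neg_one_pow ⟨K+1, by ring⟩
  linear_combination (-(-1:ℂ)^(K+1)) * hzero.symm
    + ((b-a)*T'*W + a*A*U' - b*B*V') * hss

end Stmt12



open Matrix in
/-- second bilinear equation for the Casorati determinants. -/
theorem stmt_12 (N : ℕ) (hN : 1 ≤ N) (φ ψ : Fin N → ℤ → ℤ → ℂ) (μ : ℤ → ℂ)
    (p : Fin N → ℂ) (hμ : ∀ t, μ t ≠ 0) (hp : ∀ i, p i ≠ 0)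
    (hP : ∀ i t, (1 - p i * μ t) * (1 - (p i)⁻¹ * μ t) ≠ 0)
    (h1 : ∀ i t n, φ i (t + 1) n = φ i t n - μ t * φ i t (n + 1))
    (h2 : ∀ i t n, ψ i t n = φ i (t - 1) n - μ t * φ i (t - 1) (n + 1))
    (h3 : ∀ i t n, (1 - p i * μ t) * (1 - (p i)⁻¹ * μ t) * φ i (t - 1) n
          = ψ i t n - μ t * ψ i t (n - 1))
    (τ σ : ℤ → ℤ → ℂ)
    (hτ : ∀ t n, τ t n = Matrix.det (Matrix.of fun i j : Fin N => φ i t (n + (j : ℤ))))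
    (hσ : ∀ t n, σ t n = Matrix.det (Matrix.of fun i j : Fin N => ψ i t (n + (j : ℤ)))) :
    ∀ t n : ℤ,
      μ t * σ t n * τ t (n + 1) - μ (t - 1) * τ t n * σ t (n + 1)
      = (μ t - μ (t - 1)) * τ (t + 1) n * τ (t - 1) (n + 1) := by
  intro t n
  by_cases hN1 : N = 1
  · subst hN1
    rw [hσ t n, hσ t (n+1), hτ t n, hτ t (n+1), hτ (t+1) n, hτ (t-1) (n+1)]
    simp only [Matrix.det_fin_one, Matrix.of_apply, Fin.val_zero, Nat.cast_zero, add_zero]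
    have ha : ∀ m : ℤ, φ 0 t m = φ 0 (t-1) m - μ (t-1) * φ 0 (t-1) (m+1) := by
      intro m
      have h := h1 0 (t-1) m
      rwa [sub_add_cancel] at h
    rw [h2 0 t n, h2 0 t (n+1), h1 0 t n, ha n, ha (n+1)]
    rw [show n + 1 + 1 = n + 2 from by ring]
    ring
  · have h2le : 2 ≤ N := by omega
    obtain ⟨K, rfl⟩ : ∃ K, N = K + 2 := ⟨N - 2, by omega⟩
    rw [hσ t n, hσ t (n+1), hτ t n, hτ t (n+1), hτ (t+1) n, hτ (t-1) (n+1)]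
    have key := Stmt12.main K (μ (t-1)) (μ t)
      (fun m i => φ i (t-1) (n + (m:ℤ)))
      (fun m i => ψ i t (n + (m:ℤ)))
      (fun m i => φ i t (n + (m:ℤ)))
      (fun m i => φ i (t+1) (n + (m:ℤ)))
      (by
        intro m i
        show ψ i t (n + (m:ℤ))
          = φ i (t-1) (n + (m:ℤ)) - μ t * φ i (t-1) (n + (((m+1:ℕ)):ℤ))
        rw [show (((m+1:ℕ)):ℤ) = (m:ℤ) + 1 from by push_cast; ring, ← add_assoc]
        exact h2 i t (n + (m:ℤ)))
      (by
        intro m i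
        show φ i t (n + (m:ℤ))
          = φ i (t-1) (n + (m:ℤ)) - μ (t-1) * φ i (t-1) (n + (((m+1:ℕ)):ℤ))
        rw [show (((m+1:ℕ)):ℤ) = (m:ℤ) + 1 from by push_cast; ring, ← add_assoc]
        have h := h1 i (t-1) (n + (m:ℤ))
        rwa [sub_add_cancel] at h)
      (by
        intro m i
        show φ i (t+1) (n + (m:ℤ))
          = φ i (t-1) (n + (m:ℤ))
            - (μ (t-1) + μ t) * φ i (t-1) (n + (((m+1:ℕ)):ℤ))
            + μ (t-1) * μ t * φ i (t-1) (n + (((m+2:ℕ)):ℤ))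
        have ha : ∀ x : ℤ, φ i t x = φ i (t-1) x - μ (t-1) * φ i (t-1) (x+1) := by
          intro x
          have h := h1 i (t-1) x
          rwa [sub_add_cancel] at h
        rw [show (((m+1:ℕ)):ℤ) = (m:ℤ) + 1 from by push_cast; ring,
          show (((m+2:ℕ)):ℤ) = (m:ℤ) + 2 from by push_cast; ring,
          show n + ((m:ℤ) + 1) = n + (m:ℤ) + 1 from by ring,
          show n + ((m:ℤ) + 2) = n + (m:ℤ) + 1 + 1 from by ring]
        rw [h1 i t (n + (m:ℤ)), ha (n + (m:ℤ)), ha (n + (m:ℤ) + 1)]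
        ring)
    have e1 : Matrix.det (Matrix.of fun i (j : Fin (K+2)) => ψ i t (n + 1 + (j:ℤ)))
        = Matrix.det (Matrix.of fun i (j : Fin (K+2)) =>
            ψ i t (n + ((((j:ℕ)+1 : ℕ)):ℤ))) := by
      congr 1
      ext i j
      simp only [Matrix.of_apply]
      congr 1
      push_cast
      ring
    have e2 : Matrix.det (Matrix.of fun i (j : Fin (K+2)) => φ i t (n + 1 + (j:ℤ)))
        = Matrix.det (Matrix.of fun i (j : Fin (K+2)) =>
            φ i t (n + ((((j:ℕ)+1 : ℕ)):ℤ))) := by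
      congr 1
      ext i j
      simp only [Matrix.of_apply]
      congr 1
      push_cast
      ring
    have e3 : Matrix.det (Matrix.of fun i (j : Fin (K+2)) => φ i (t-1) (n + 1 + (j:ℤ)))
        = Matrix.det (Matrix.of fun i (j : Fin (K+2)) =>
            φ i (t-1) (n + ((((j:ℕ)+1 : ℕ)):ℤ))) := by
      congr 1
      ext i j
      simp only [Matrix.of_apply]
      congr 1
      push_cast
      ring
    rw [e1, e2, e3]
    exact key
end

section
/- Suppose τ : ℤ × ℤ → ℂ and σ : ℤ × ℤ → ℂ are nowhere-vanishing functions satisfying the two bilinear equations τ_n^{t-1} τ_n^{t+1} - τ_n^t σ_n^t = μ_{t-1} μ_t (τ_{n-1}^{t+1} τ_{n+1}^{t-1} - τ_n^t σ_n^t) and μ_t σ_n^t τ_{n+1}^t - μ_{t-1} τ_n^t σ_{n+1}^t = (μ_t - μ_{t-1}) τ_n^{t+1} τ_{n+1}^{t-1} for all n, t, where μ_t ≠ 0 for all t. Define A_n^t = -μ_t^{-1} τ_n^t τ_{n+1}^{t+1} / (τ_n^{t+1} τ_{n+1}^t), B_n^t = -μ_t τ_{n-1}^{t+1} τ_{n+1}^t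 / (τ_n^t τ_n^{t+1}), and λ_t = μ_t + μ_t^{-1}. Then A_n^{t+1} + B_n^{t+1} + λ_{t+1} = A_n^t + B_{n+1}^t + λ_t for all n, t. -/
/-- the bilinear equations imply the first equation of the
non-autonomous discrete-time Toda lattice. -/
theorem stmt_13 (μ : ℤ → ℂ) (hμ : ∀ t, μ t ≠ 0) (τ σ : ℤ → ℤ → ℂ)
    (hτ : ∀ t n, τ t n ≠ 0) (hσ : ∀ t n, σ t n ≠ 0)
    (hb1 : ∀ t n, τ (t - 1) n * τ (t + 1) n - τ t n * σ t n
          = μ (t - 1) * μ t * (τ (t + 1) (n - 1) * τ (t - 1) (n + 1) - τ t n * σ t n))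
    (hb2 : ∀ t n, μ t * σ t n * τ t (n + 1) - μ (t - 1) * τ t n * σ t (n + 1)
          = (μ t - μ (t - 1)) * τ (t + 1) n * τ (t - 1) (n + 1))
    (A B : ℤ → ℤ → ℂ) (lam : ℤ → ℂ)
    (hA : ∀ t n, A t n = -(μ t)⁻¹ * (τ t n * τ (t + 1) (n + 1)) / (τ (t + 1) n * τ t (n + 1)))
    (hB : ∀ t n, B t n = -(μ t) * (τ (t + 1) (n - 1) * τ t (n + 1)) / (τ t n * τ (t + 1) n))
    (hlam : ∀ t, lam t = μ t + (μ t)⁻¹) :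
    ∀ t n, A (t + 1) n + B (t + 1) n + lam (t + 1) = A t n + B t (n + 1) + lam t := by
  intro t n
  have h1 := hb1 (t + 1) n
  have h2 := hb1 (t + 1) (n + 1)
  have h3 := hb2 (t + 1) n
  simp only [add_sub_cancel_right, show t + 1 + 1 = t + 2 from by ring,
    show n + 1 + 1 = n + 2 from by ring] at h1 h2 h3
  rw [hA, hA, hB, hB, hlam, hlam]
  simp only [show t + 1 + 1 = t + 2 from by ring, show n + 1 + 1 = n + 2 from by ring]
  have hμ0 := hμ t
  have hμ1 := hμ (t + 1)
  field_simp [hτ]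
  simp only [add_sub_cancel_right]
  linear_combination
    (-(μ t * μ (t + 1) - 1) * τ (t + 1) n * τ (t + 1) (n + 1)) * h3
    + (μ (t + 1) * (τ (t + 1) (n + 1))^2) * h1
    - (μ t * (τ (t + 1) n)^2) * h2
end
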